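/- arXiv:2206.11103 — 9 statements merged into one kernel-verified Lean document; each statement's English description precedes it below -/
import Mathlib

section
/- Let μ > 1 and T > 0. Suppose h : [0,∞) → [0,∞) is an integrable function satisfying ∫₀^∞ h(t) dt = T and h(t) ≤ e^{μt} for all t ≥ 0. Then ∫₀^∞ h(t)·e^{−t} dt ≤ (μ/(μ−1))·T^{1−1/μ}. -/
open MeasureTheory

/-- If `h : [0,∞) → [0,∞)` is integrable with `∫₀^∞ h = T` and `h(t) ≤ e^{μt}`, `μ > 1`,
then `∫₀^∞ h(t)e^{−t} dt ≤ (μ/(μ−1))·T^{1−1/μ}`. -/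
theorem integral_discounted_le {μ T : ℝ} (hμ : 1 < μ) (hT : 0 < T)
    (h : ℝ → ℝ) (hnonneg : ∀ t, 0 ≤ t → 0 ≤ h t)
    (hint : IntegrableOn h (Set.Ici 0))
    (hsum : ∫ t in Set.Ici (0 : ℝ), h t = T)
    (hbound : ∀ t, 0 ≤ t → h t ≤ Real.exp (μ * t)) :
    ∫ t in Set.Ici (0 : ℝ), h t * Real.exp (-t)
      ≤ μ / (μ - 1) * T ^ (1 - 1 / μ) := by
  have hμ0 : (0:ℝ) < μ := lt_trans one_pos hμ
  have hμ1 : (0:ℝ) < μ - 1 := sub_pos.mpr hμ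
  have hrp : (0:ℝ) ≤ T ^ (1 - 1 / μ) := Real.rpow_nonneg hT.le _
  have hfrac : (1:ℝ) ≤ μ / (μ - 1) := (one_le_div hμ1).mpr (by linarith)
  -- integrability of the discounted integrand on [0,∞)
  have hintd : IntegrableOn (fun t => h t * Real.exp (-t)) (Set.Ici 0) := by
    refine Integrable.bdd_mul (c := 1) hint
      ((Real.continuous_exp.comp continuous_neg).aestronglyMeasurable) ?_ |>.congr ?_
    · refine (ae_restrict_iff' measurableSet_Ici).mpr (ae_of_all _ fun x hx => ?_)
      show |Real.exp (-x)| ≤ 1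
      rw [abs_of_pos (Real.exp_pos _)]
      exact Real.exp_le_one_iff.mpr (neg_nonpos_of_nonneg hx)
    · exact ae_of_all _ fun x => mul_comm _ _
  rcases le_or_gt T 1 with hT1 | hT1
  · -- small T : just bound exp(-t) ≤ 1
    have h1 : ∫ t in Set.Ici (0:ℝ), h t * Real.exp (-t) ≤ ∫ t in Set.Ici (0:ℝ), h t := by
      refine setIntegral_mono_on hintd hint measurableSet_Ici fun t ht => ?_
      have := Real.exp_le_one_iff.mpr (neg_nonpos_of_nonneg ht)
      nlinarith [hnonneg t ht]
    have h2 : T ≤ T ^ (1 - 1/μ) := by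
      nth_rewrite 1 [← Real.rpow_one T]
      refine Real.rpow_le_rpow_of_exponent_ge hT hT1 ?_
      have : (0:ℝ) < 1/μ := by positivity
      linarith
    calc ∫ t in Set.Ici (0:ℝ), h t * Real.exp (-t) ≤ T := by rw [← hsum]; exact h1
      _ ≤ T ^ (1 - 1/μ) := h2
      _ ≤ μ / (μ - 1) * T ^ (1 - 1/μ) := le_mul_of_one_le_left hrp hfrac
  · -- large T : split at s = log T / μ
    set s := Real.log T / μ with hs_def
    have hlogT : 0 < Real.log T := Real.log_pos hT1
    have hs : 0 ≤ s := le_of_lt (div_pos hlogT hμ0)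
    have hsplit : Set.Ico (0:ℝ) s ∪ Set.Ici s = Set.Ici 0 := Set.Ico_union_Ici_eq_Ici hs
    have hdisj : Disjoint (Set.Ico (0:ℝ) s) (Set.Ici s) := by
      rw [Set.disjoint_left]; exact fun x hx hx' => absurd hx' (not_le.mpr hx.2)
    have hintd1 : IntegrableOn (fun t => h t * Real.exp (-t)) (Set.Ico 0 s) :=
      hintd.mono_set (by rw [← hsplit]; exact Set.subset_union_left)
    have hintd2 : IntegrableOn (fun t => h t * Real.exp (-t)) (Set.Ici s) :=
      hintd.mono_set (by rw [← hsplit]; exact Set.subset_union_right)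
    have hint2 : IntegrableOn h (Set.Ici s) :=
      hint.mono_set (by rw [← hsplit]; exact Set.subset_union_right)
    have hsum_split : ∫ t in Set.Ici (0:ℝ), h t * Real.exp (-t)
        = (∫ t in Set.Ico (0:ℝ) s, h t * Real.exp (-t))
          + ∫ t in Set.Ici s, h t * Real.exp (-t) := by
      rw [← hsplit, setIntegral_union hdisj measurableSet_Ici hintd1 hintd2]
    -- exponent identities
    have hTs : Real.exp ((μ - 1) * s) = T ^ (1 - 1/μ) := by
      rw [Real.rpow_def_of_pos hT]
      congr 1
      rw [hs_def]
      field_simp [hs_def]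
    have hTs2 : Real.exp (-s) * T = T ^ (1 - 1/μ) := by
      have : T ^ (1 - 1/μ) = T ^ (1:ℝ) * T ^ (-(1/μ)) := by
        rw [← Real.rpow_add hT]; ring_nf
      rw [this, Real.rpow_one, Real.rpow_def_of_pos hT, mul_comm]
      congr 1
      field_simp [hs_def]
      rw [hs_def]
    -- first piece
    have hcont : Continuous fun t : ℝ => Real.exp ((μ - 1) * t) :=
      Real.continuous_exp.comp (continuous_const.mul continuous_id)
    have hinte : IntegrableOn (fun t => Real.exp ((μ - 1) * t)) (Set.Ico 0 s) :=
      hcont.integrableOn_Icc.mono_set Set.Ico_subset_Icc_self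
    have h1 : ∫ t in Set.Ico (0:ℝ) s, h t * Real.exp (-t)
        ≤ ∫ t in Set.Ico (0:ℝ) s, Real.exp ((μ - 1) * t) := by
      refine setIntegral_mono_on hintd1 hinte measurableSet_Ico fun t ht => ?_
      have hb := hbound t ht.1
      have := Real.exp_pos (-t)
      calc h t * Real.exp (-t) ≤ Real.exp (μ * t) * Real.exp (-t) := by nlinarith
        _ = Real.exp ((μ - 1) * t) := by rw [← Real.exp_add]; ring_nf
    have h1' : ∫ t in Set.Ico (0:ℝ) s, Real.exp ((μ - 1) * t)
        ≤ T ^ (1 - 1/μ) / (μ - 1) := by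
      have heq : ∫ t in Set.Ico (0:ℝ) s, Real.exp ((μ - 1) * t)
          = ∫ t in (0:ℝ)..s, Real.exp ((μ - 1) * t) := by
        rw [integral_Ico_eq_integral_Ioo, ← integral_Ioc_eq_integral_Ioo, intervalIntegral.integral_of_le hs]
      have hcalc : ∫ t in (0:ℝ)..s, Real.exp ((μ - 1) * t)
          = (Real.exp ((μ - 1) * s) - 1) / (μ - 1) := by
        have hderiv : ∀ x ∈ Set.uIcc (0:ℝ) s,
            HasDerivAt (fun t => Real.exp ((μ - 1) * t) / (μ - 1))
              (Real.exp ((μ - 1) * x)) x := by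
          intro x _
          have := ((Real.hasDerivAt_exp ((μ - 1) * x)).comp x
            ((hasDerivAt_id x).const_mul (μ - 1))).div_const (μ - 1)
          simpa [mul_comm, mul_div_assoc, mul_div_cancel_left₀ _ hμ1.ne'] using this
        rw [intervalIntegral.integral_eq_sub_of_hasDerivAt hderiv
          (hcont.intervalIntegrable 0 s)]
        simp [sub_div]
      rw [heq, hcalc, hTs]
      have := Real.exp_pos ((μ - 1) * s)
      rw [div_le_div_iff₀ hμ1 hμ1]
      nlinarith
    -- second piece
    have h2 : ∫ t in Set.Ici s, h t * Real.exp (-t) ≤ T ^ (1 - 1/μ) := by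
      have step1 : ∫ t in Set.Ici s, h t * Real.exp (-t)
          ≤ ∫ t in Set.Ici s, h t * Real.exp (-s) := by
        refine setIntegral_mono_on hintd2 (hint2.mul_const _) measurableSet_Ici
          fun t ht => ?_
        have hts : -t ≤ -s := neg_le_neg ht
        have := Real.exp_le_exp.mpr hts
        have h0t : 0 ≤ t := le_trans hs ht
        nlinarith [hnonneg t h0t, Real.exp_pos (-t)]
      have step2 : ∫ t in Set.Ici s, h t * Real.exp (-s)
          = Real.exp (-s) * ∫ t in Set.Ici s, h t := by
        rw [integral_mul_const]; ring
      have step3 : ∫ t in Set.Ici s, h t ≤ T := by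
        rw [← hsum]
        refine setIntegral_mono_set hint ?_ ?_
        · exact (ae_restrict_iff' measurableSet_Ici).mpr
            (ae_of_all _ fun x hx => hnonneg x hx)
        · exact ae_of_all _ (Set.Ici_subset_Ici.mpr hs)
      calc ∫ t in Set.Ici s, h t * Real.exp (-t)
          ≤ Real.exp (-s) * ∫ t in Set.Ici s, h t := by rw [← step2]; exact step1
        _ ≤ Real.exp (-s) * T :=
            mul_le_mul_of_nonneg_left step3 (Real.exp_pos _).le
        _ = T ^ (1 - 1/μ) := hTs2
    rw [hsum_split]
    have : μ / (μ - 1) * T ^ (1 - 1/μ) = T ^ (1 - 1/μ) / (μ - 1) + T ^ (1 - 1/μ) := by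
      field_simp
      ring
    rw [this]
    exact add_le_add (h1.trans h1') h2
end

section
/- Let μ > 1, A > 0, and T > 0. Suppose (n_k)_{k≥1} is a sequence of nonnegative real numbers with ∑_{k=1}^∞ n_k = T and n_k ≤ A·e^{μk} for all k ≥ 1. Then ∑_{k=1}^∞ n_k·e^{−k} ≤ (μ/(μ−1))·A^{1/μ}·T^{1−1/μ}. -/
open Real

lemma core_ineq {β θ : ℝ} (hβ : 0 < β) (hθ0 : 0 ≤ θ) (hθ1 : θ ≤ 1) :
    Real.exp (-(β+1)*θ) + Real.exp (-β)/(1 - Real.exp (-β)) - Real.exp (-(β+1))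
      ≤ (1 + 1/β) * Real.exp (-β*θ) := by
  obtain ⟨q, hq_def⟩ : ∃ q, q = Real.exp (-β) := ⟨_, rfl⟩
  rw [← hq_def]
  have hq0 : 0 < q := hq_def ▸ Real.exp_pos _
  have hq1 : q < 1 := by
    rw [hq_def]; exact Real.exp_lt_one_iff.mpr (by linarith)
  have hqe : (1+β) * q ≤ 1 := by
    have h1 : β + 1 ≤ Real.exp β := Real.add_one_le_exp β
    have h2 : Real.exp β * q = 1 := by rw [hq_def, ← Real.exp_add]; simp
    nlinarith [hq0]
  -- step 1 : q/(1-q) ≤ q/β + q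
  have h1 : q/(1-q) ≤ q/β + q := by
    rw [div_le_iff₀ (by linarith)]
    have hw : q/β*β = q := div_mul_cancel₀ _ (ne_of_gt hβ)
    nlinarith [hqe, hq0, hβ, mul_pos (div_pos hq0 hβ) hq0]
  -- convexity chord : exp(-θ) ≤ 1 - (1 - exp(-1))*θ
  obtain ⟨c, hc_def⟩ : ∃ c : ℝ, c = 1 - Real.exp (-1) := ⟨_, rfl⟩
  have hc0 : 0 < c := by
    have : Real.exp (-1) < 1 := Real.exp_lt_one_iff.mpr (by norm_num)
    rw [hc_def]; linarith
  have hc1 : c < 1 := by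
    have : 0 < Real.exp (-1) := Real.exp_pos _
    rw [hc_def]; linarith
  have hchord : Real.exp (-θ) ≤ 1 - c*θ := by
    have h := convexOn_exp.2 (Set.mem_univ (0:ℝ)) (Set.mem_univ (-1:ℝ))
      (by linarith : (0:ℝ) ≤ 1 - θ) hθ0 (by ring)
    simp only [smul_eq_mul, mul_zero, mul_neg_one, zero_add, Real.exp_zero, mul_one] at h
    calc Real.exp (-θ) ≤ (1-θ) + θ * Real.exp (-1) := h
      _ = 1 - c*θ := by rw [hc_def]; ring
  -- step 4 : exp(-β*θ)*(1/β + c*θ) ≥ q*(1/β + c)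
  have h4 : q*(1/β + c) ≤ Real.exp (-β*θ) * (1/β + c*θ) := by
    have hsplit : Real.exp (-β*θ) = q * Real.exp (β*(1-θ)) := by
      rw [hq_def, ← Real.exp_add]; ring_nf
    have hlin : 1 + β*(1-θ) ≤ Real.exp (β*(1-θ)) := by
      have := Real.add_one_le_exp (β*(1-θ)); linarith
    have hpos : (0:ℝ) ≤ 1/β + c*θ := by positivity
    calc q*(1/β + c) ≤ q * ((1 + β*(1-θ)) * (1/β + c*θ)) := by
          have key : 1/β + c ≤ (1 + β*(1-θ)) * (1/β + c*θ) := by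
            rw [← sub_nonneg]
            have hid : (1 + β*(1-θ)) * (1/β + c*θ) - (1/β + c) = (1-θ)*(1-c+β*c*θ) := by
              field_simp; ring
            rw [hid]
            have h1 : 0 ≤ 1-θ := by linarith
            have h2 : 0 ≤ 1-c+β*c*θ := by nlinarith [mul_nonneg (mul_nonneg hβ.le hc0.le) hθ0]
            exact mul_nonneg h1 h2
          nlinarith [hq0]
      _ ≤ Real.exp (-β*θ) * (1/β + c*θ) := by
          rw [hsplit, mul_assoc]
          exact mul_le_mul_of_nonneg_left (mul_le_mul_of_nonneg_right hlin hpos) hq0.le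
  -- combine
  have hr : Real.exp (-(β+1)) = q * Real.exp (-1) := by rw [hq_def, ← Real.exp_add]; ring_nf
  have hsplit2 : Real.exp (-(β+1)*θ) = Real.exp (-β*θ) * Real.exp (-θ) := by
    rw [← Real.exp_add]; ring_nf
  have hE : 0 < Real.exp (-β*θ) := Real.exp_pos _
  have hmain : Real.exp (-β*θ) * Real.exp (-θ) + q/β + q - q*Real.exp (-1)
      ≤ (1 + 1/β) * Real.exp (-β*θ) := by
    have e1 : Real.exp (-β*θ) * Real.exp (-θ) ≤ Real.exp (-β*θ) * (1 - c*θ) :=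
      mul_le_mul_of_nonneg_left hchord hE.le
    have e2 : q/β + q - q*Real.exp (-1) = q*(1/β + c) := by rw [hc_def]; ring
    have e3 : Real.exp (-β*θ) * (1 - c*θ) + Real.exp (-β*θ) * (1/β + c*θ)
        = (1 + 1/β) * Real.exp (-β*θ) := by ring
    nlinarith [h4, e1, e2, e3]
  rw [hsplit2, hr]
  nlinarith [h1, hmain]

/-- If `(n_k)_{k≥1}` are nonnegative reals with `∑ n_k = T` and `n_k ≤ A·e^{μk}`, `μ > 1`,
then `∑ n_k·e^{−k} ≤ (μ/(μ−1))·A^{1/μ}·T^{1−1/μ}`. -/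
theorem tsum_discounted_le {μ A T : ℝ} (hμ : 1 < μ) (hA : 0 < A) (hT : 0 < T)
    (n : ℕ → ℝ) (hnonneg : ∀ k, 1 ≤ k → 0 ≤ n k)
    (hsum : HasSum (fun k : ℕ => n (k + 1)) T)
    (hbound : ∀ k, 1 ≤ k → n k ≤ A * Real.exp (μ * k)) :
    ∑' k : ℕ, n (k + 1) * Real.exp (-((k : ℝ) + 1))
      ≤ μ / (μ - 1) * A ^ (1 / μ) * T ^ (1 - 1 / μ) := by
  have hμ0 : (0:ℝ) < μ := by linarith
  have hβ : (0:ℝ) < μ - 1 := by linarith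
  obtain ⟨t, ht_def⟩ : ∃ t, t = T / A := ⟨_, rfl⟩
  have ht : 0 < t := ht_def ▸ div_pos hT hA
  have hAt : A * t = T := by rw [ht_def]; field_simp
  obtain ⟨x, hx_def⟩ : ∃ x, x = Real.log t / μ := ⟨_, rfl⟩
  have hμx : μ * x = Real.log t := by rw [hx_def]; field_simp
  obtain ⟨m, hm_def⟩ : ∃ m : ℕ, m = max 1 ⌈x⌉₊ := ⟨_, rfl⟩
  have hm1 : 1 ≤ m := hm_def ▸ le_max_left _ _
  have hxm : x ≤ (m:ℝ) := by
    rcases le_or_gt x 0 with h|h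
    · have : (0:ℝ) ≤ m := Nat.cast_nonneg m
      linarith
    · calc x ≤ (⌈x⌉₊:ℝ) := Nat.le_ceil x
        _ ≤ (m:ℝ) := by exact_mod_cast hm_def ▸ le_max_right 1 ⌈x⌉₊
  have hlog : Real.log t ≤ μ * m := by
    rw [← hμx]; exact mul_le_mul_of_nonneg_left hxm hμ0.le
  -- t as an exponential
  have ht_exp : t = Real.exp (μ * x) := by rw [hμx, Real.exp_log ht]
  -- Step 1 : summability facts
  have hn1 : ∀ k : ℕ, 0 ≤ n (k+1) := fun k => hnonneg (k+1) (by omega)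
  have hb1 : ∀ k : ℕ, n (k+1) ≤ A * Real.exp (μ * ((k:ℝ)+1)) := by
    intro k
    have := hbound (k+1) (by omega)
    push_cast at this
    exact this
  have hfs : Summable (fun k : ℕ => n (k+1) * Real.exp (-((k:ℝ)+1))) := by
    apply Summable.of_nonneg_of_le
      (fun k => mul_nonneg (hn1 k) (Real.exp_pos _).le) (fun k => ?_) hsum.summable
    calc n (k+1) * Real.exp (-((k:ℝ)+1)) ≤ n (k+1) * 1 := by
          apply mul_le_mul_of_nonneg_left ?_ (hn1 k)
          exact Real.exp_le_one_iff.mpr (by have h0 : (0:ℝ) ≤ (k:ℝ) := Nat.cast_nonneg k; linarith)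
      _ = n (k+1) := mul_one _
  have hsm : Summable (fun k : ℕ => n (k+1) * Real.exp (-(m:ℝ))) := hsum.summable.mul_right _
  have hgs : Summable (fun k : ℕ => n (k+1) * (Real.exp (-((k:ℝ)+1)) - Real.exp (-(m:ℝ)))) := by
    have h := hfs.sub hsm
    have heq : (fun k : ℕ => n (k+1) * Real.exp (-((k:ℝ)+1)) - n (k+1) * Real.exp (-(m:ℝ)))
        = (fun k : ℕ => n (k+1) * (Real.exp (-((k:ℝ)+1)) - Real.exp (-(m:ℝ)))) := by
      funext k; ring
    rwa [heq] at h
  have key1 : ∑' k : ℕ, n (k+1) * Real.exp (-((k:ℝ)+1))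
      = T * Real.exp (-(m:ℝ))
        + ∑' k : ℕ, n (k+1) * (Real.exp (-((k:ℝ)+1)) - Real.exp (-(m:ℝ))) := by
    have heq : (fun k : ℕ => n (k+1) * Real.exp (-((k:ℝ)+1)))
        = (fun k : ℕ => n (k+1) * Real.exp (-(m:ℝ))
            + n (k+1) * (Real.exp (-((k:ℝ)+1)) - Real.exp (-(m:ℝ)))) := by
      funext k; ring
    rw [heq, Summable.tsum_add hsm hgs, tsum_mul_right, hsum.tsum_eq]
  -- Step 2 : compare the second tsum with a finite sum
  classical
  have key2 : ∑' k : ℕ, n (k+1) * (Real.exp (-((k:ℝ)+1)) - Real.exp (-(m:ℝ)))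
      ≤ ∑ k ∈ Finset.range (m-1),
          A * Real.exp (μ*((k:ℝ)+1)) * (Real.exp (-((k:ℝ)+1)) - Real.exp (-(m:ℝ))) := by
    obtain ⟨F, hF⟩ : ∃ F : ℕ → ℝ, F = fun k : ℕ =>
        if k ∈ Finset.range (m-1) then
          A * Real.exp (μ*((k:ℝ)+1)) * (Real.exp (-((k:ℝ)+1)) - Real.exp (-(m:ℝ))) else 0 :=
      ⟨_, rfl⟩
    have hFz : ∀ b ∉ Finset.range (m-1), F b = 0 := fun b hb => by rw [hF]; exact if_neg hb
    have hFs : Summable F := summable_of_ne_finset_zero hFz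
    have hle : ∀ k : ℕ, n (k+1) * (Real.exp (-((k:ℝ)+1)) - Real.exp (-(m:ℝ))) ≤ F k := by
      intro k
      by_cases hk : k ∈ Finset.range (m-1)
      · simp only [hF, if_pos hk]
        have hkm : k + 1 < m := by
          have := Finset.mem_range.mp hk; omega
        have hpos : 0 ≤ Real.exp (-((k:ℝ)+1)) - Real.exp (-(m:ℝ)) := by
          have : ((k:ℝ)+1) ≤ (m:ℝ) := by exact_mod_cast Nat.le_of_lt hkm
          have := Real.exp_le_exp.mpr (neg_le_neg this)
          linarith
        exact mul_le_mul_of_nonneg_right (hb1 k) hpos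
      · simp only [hF, if_neg hk]
        have hkm : m ≤ k + 1 := by
          simp only [Finset.mem_range] at hk; omega
        have hneg : Real.exp (-((k:ℝ)+1)) - Real.exp (-(m:ℝ)) ≤ 0 := by
          have : (m:ℝ) ≤ ((k:ℝ)+1) := by exact_mod_cast hkm
          have := Real.exp_le_exp.mpr (neg_le_neg this)
          linarith
        exact mul_nonpos_of_nonneg_of_nonpos (hn1 k) hneg
    calc ∑' k : ℕ, n (k+1) * (Real.exp (-((k:ℝ)+1)) - Real.exp (-(m:ℝ)))
        ≤ ∑' k, F k := Summable.tsum_le_tsum hle hgs hFs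
      _ = ∑ k ∈ Finset.range (m-1), F k := tsum_eq_sum hFz
      _ = ∑ k ∈ Finset.range (m-1),
          A * Real.exp (μ*((k:ℝ)+1)) * (Real.exp (-((k:ℝ)+1)) - Real.exp (-(m:ℝ))) :=
        Finset.sum_congr rfl (fun k hk => by rw [hF]; exact if_pos hk)
  -- conversion of the target
  have hApow : A ^ (1/μ) * A ^ (1 - 1/μ) = A := by
    rw [← Real.rpow_add hA]
    norm_num
  have hconv : A * t ^ (1 - 1/μ) = A ^ (1/μ) * T ^ (1 - 1/μ) := by
    have hAc : (0:ℝ) < A ^ (1 - 1/μ) := Real.rpow_pos_of_pos hA _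
    rw [ht_def, Real.div_rpow hT.le hA.le, ← mul_div_assoc, div_eq_iff (ne_of_gt hAc),
      mul_right_comm, hApow]
  rcases eq_or_lt_of_le hm1 with hm_eq | hm2
  · -- case m = 1
    subst hm_eq
    have hsum0 : ∑ k ∈ Finset.range (1-1),
        A * Real.exp (μ*((k:ℝ)+1)) * (Real.exp (-((k:ℝ)+1)) - Real.exp (-((1:ℕ):ℝ))) = 0 := by
      simp
    have hlt : Real.log t ≤ μ := by
      have : ((1:ℕ):ℝ) = 1 := by norm_num
      rw [this] at hlog; linarith
    have h1μ : t ^ (1/μ) ≤ Real.exp 1 := by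
      rw [Real.rpow_def_of_pos ht]
      apply Real.exp_le_exp.mpr
      rw [mul_one_div, div_le_one hμ0]
      exact hlt
    have hts : t ^ (1-1/μ) * t ^ (1/μ) = t := by
      rw [← Real.rpow_add ht]; norm_num
    have htp : (0:ℝ) < t ^ (1-1/μ) := Real.rpow_pos_of_pos ht _
    have hee : Real.exp 1 * Real.exp (-1) = 1 := by
      rw [← Real.exp_add]; norm_num
    have hmain1 : T * Real.exp (-((1:ℕ):ℝ)) ≤ μ/(μ-1) * A ^ (1/μ) * T ^ (1-1/μ) := by
      have hc1 : ((1:ℕ):ℝ) = 1 := by norm_num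
      rw [hc1]
      have step1 : T * Real.exp (-1) ≤ A * t ^ (1-1/μ) := by
        have e1 : t ^ (1/μ) * Real.exp (-1) ≤ 1 := by
          calc t ^ (1/μ) * Real.exp (-1) ≤ Real.exp 1 * Real.exp (-1) :=
                mul_le_mul_of_nonneg_right h1μ (Real.exp_pos _).le
            _ = 1 := hee
        calc T * Real.exp (-1) = A * (t ^ (1-1/μ) * t ^ (1/μ)) * Real.exp (-1) := by
              rw [hts, hAt]
          _ = (A * t ^ (1-1/μ)) * (t ^ (1/μ) * Real.exp (-1)) := by ring
          _ ≤ (A * t ^ (1-1/μ)) * 1 := by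
              apply mul_le_mul_of_nonneg_left e1 (by positivity)
          _ = A * t ^ (1-1/μ) := mul_one _
      have step2 : A * t ^ (1-1/μ) ≤ μ/(μ-1) * (A * t ^ (1-1/μ)) := by
        have h1 : (1:ℝ) ≤ μ/(μ-1) := by
          rw [le_div_iff₀ hβ]; linarith
        nlinarith [mul_pos hA htp]
      calc T * Real.exp (-1) ≤ A * t ^ (1-1/μ) := step1
        _ ≤ μ/(μ-1) * (A * t ^ (1-1/μ)) := step2
        _ = μ/(μ-1) * A ^ (1/μ) * T ^ (1-1/μ) := by rw [hconv, mul_assoc]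
    rw [key1]
    have hg0 : ∑' k : ℕ, n (k+1) * (Real.exp (-((k:ℝ)+1)) - Real.exp (-((1:ℕ):ℝ))) ≤ 0 := by
      calc ∑' k : ℕ, n (k+1) * (Real.exp (-((k:ℝ)+1)) - Real.exp (-((1:ℕ):ℝ)))
          ≤ ∑ k ∈ Finset.range (1-1),
            A * Real.exp (μ*((k:ℝ)+1)) * (Real.exp (-((k:ℝ)+1)) - Real.exp (-((1:ℕ):ℝ))) := key2
        _ = 0 := hsum0
    have hstep := add_le_add_left hg0 (T * Real.exp (-((1:ℕ):ℝ)))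
    rw [zero_add] at hstep
    exact le_trans ((add_comm _ _).trans_le hstep) hmain1
  · -- case 2 ≤ m
    have hceil : m = ⌈x⌉₊ := by omega
    have hx1 : (1:ℝ) < x := by
      have h1 : 1 < ⌈x⌉₊ := by omega
      exact_mod_cast Nat.lt_ceil.mp h1
    have hx0 : (0:ℝ) ≤ x := by linarith
    have hθ0 : 0 ≤ (m:ℝ) - x := by linarith [hxm]
    have hθ1 : (m:ℝ) - x ≤ 1 := by
      have h := Nat.ceil_lt_add_one hx0
      have h2 : (m:ℝ) = (⌈x⌉₊:ℝ) := by exact_mod_cast congrArg (Nat.cast : ℕ → ℝ) hceil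
      linarith
    have hm2' : 2 ≤ m := hm2
    -- rewrite terms of the finite sum as differences
    have hterm : ∀ k ∈ Finset.range (m-1),
        A * Real.exp (μ*((k:ℝ)+1)) * (Real.exp (-((k:ℝ)+1)) - Real.exp (-(m:ℝ)))
          = A * Real.exp ((μ-1)*((k:ℝ)+1)) - A * Real.exp (μ*((k:ℝ)+1) - m) := by
      intro k _
      have e1 : Real.exp (μ*((k:ℝ)+1)) * Real.exp (-((k:ℝ)+1)) = Real.exp ((μ-1)*((k:ℝ)+1)) := by
        rw [← Real.exp_add]; congr 1 <;> ring
      have e2 : Real.exp (μ*((k:ℝ)+1)) * Real.exp (-(m:ℝ)) = Real.exp (μ*((k:ℝ)+1) - m) := by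
        rw [← Real.exp_add]; congr 1 <;> ring
      rw [mul_sub, mul_assoc, mul_assoc, e1, e2]
    have hsplit : ∑ k ∈ Finset.range (m-1),
        A * Real.exp (μ*((k:ℝ)+1)) * (Real.exp (-((k:ℝ)+1)) - Real.exp (-(m:ℝ)))
        = (∑ k ∈ Finset.range (m-1), A * Real.exp ((μ-1)*((k:ℝ)+1)))
          - ∑ k ∈ Finset.range (m-1), A * Real.exp (μ*((k:ℝ)+1) - m) := by
      rw [Finset.sum_congr rfl hterm, Finset.sum_sub_distrib]
    -- geometric sum bound
    have hy : 1 < Real.exp (μ-1) := Real.one_lt_exp_iff.mpr hβ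
    have hy1 : (0:ℝ) < Real.exp (μ-1) - 1 := by linarith
    have hgeom : ∑ k ∈ Finset.range (m-1), A * Real.exp ((μ-1)*((k:ℝ)+1))
        ≤ A * (Real.exp ((μ-1)*(m:ℝ)) / (Real.exp (μ-1) - 1)) := by
      rw [← Finset.mul_sum]
      apply mul_le_mul_of_nonneg_left ?_ hA.le
      have hsc : ∀ k ∈ Finset.range (m-1),
          Real.exp ((μ-1)*((k:ℝ)+1)) = Real.exp (μ-1) * Real.exp (μ-1) ^ k := by
        intro k _
        rw [show (μ-1)*((k:ℝ)+1) = (μ-1) + (k:ℕ)*(μ-1) by push_cast; ring, Real.exp_add,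
          Real.exp_nat_mul]
      rw [Finset.sum_congr rfl hsc, ← Finset.mul_sum, geom_sum_eq (ne_of_gt hy)]
      rw [mul_div_assoc', div_le_div_iff₀ hy1 hy1]
      have hpowm : Real.exp (μ-1) * Real.exp (μ-1) ^ (m-1) = Real.exp ((μ-1)*(m:ℝ)) := by
        rw [← pow_succ', show m - 1 + 1 = m by omega, ← Real.exp_nat_mul]
        congr 1; ring
      have hpow_pos : (0:ℝ) < Real.exp (μ-1) ^ (m-1) := by positivity
      nlinarith [hpowm, hpow_pos, hy1]
    -- single term lower bound
    have hsingle : A * Real.exp (μ*(m:ℝ) - μ - (m:ℝ))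
        ≤ ∑ k ∈ Finset.range (m-1), A * Real.exp (μ*((k:ℝ)+1) - m) := by
      have hmem : m - 2 ∈ Finset.range (m-1) := Finset.mem_range.mpr (by omega)
      have h := Finset.single_le_sum
        (f := fun k : ℕ => A * Real.exp (μ*((k:ℝ)+1) - m))
        (fun i _ => by positivity) hmem
      have hcast : ((m-2:ℕ):ℝ) + 1 = (m:ℝ) - 1 := by
        rw [Nat.cast_sub hm2']; push_cast; ring
      have h2 : A * Real.exp (μ*(((m-2:ℕ):ℝ)+1) - (m:ℝ))
          ≤ ∑ k ∈ Finset.range (m-1), A * Real.exp (μ*((k:ℝ)+1) - (m:ℝ)) := h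
      rw [hcast] at h2
      calc A * Real.exp (μ*(m:ℝ) - μ - (m:ℝ))
          = A * Real.exp (μ*((m:ℝ)-1) - m) := by congr 1; ring_nf
        _ ≤ _ := h2
    -- core inequality instance
    have core := core_ineq hβ hθ0 hθ1
    have hE : (0:ℝ) < Real.exp ((μ-1)*(m:ℝ)) := Real.exp_pos _
    have hAE : (0:ℝ) < A * Real.exp ((μ-1)*(m:ℝ)) := mul_pos hA hE
    -- identities to match core
    have iT : T * Real.exp (-(m:ℝ))
        = A * Real.exp ((μ-1)*(m:ℝ)) * Real.exp (-(μ-1+1)*((m:ℝ)-x)) := by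
      rw [← hAt, ht_exp, mul_assoc, mul_assoc, ← Real.exp_add, ← Real.exp_add]
      congr 1 <;> ring
    have iGeom : Real.exp ((μ-1)*(m:ℝ)) / (Real.exp (μ-1) - 1)
        = Real.exp ((μ-1)*(m:ℝ)) * (Real.exp (-(μ-1)) / (1 - Real.exp (-(μ-1)))) := by
      have h1 : Real.exp (μ-1) * Real.exp (-(μ-1)) = 1 := by
        rw [← Real.exp_add]; simp
      have hq1 : Real.exp (-(μ-1)) < 1 := Real.exp_lt_one_iff.mpr (by linarith)
      have hq0 : (0:ℝ) < Real.exp (-(μ-1)) := Real.exp_pos _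
      have hne1 : 1 - Real.exp (-(μ-1)) ≠ 0 := by linarith
      have hne2 : Real.exp (μ-1) - 1 ≠ 0 := ne_of_gt hy1
      have hkey : Real.exp (-(μ-1)) / (1 - Real.exp (-(μ-1))) = 1/(Real.exp (μ-1) - 1) := by
        rw [div_eq_div_iff hne1 hne2]
        linear_combination h1
      rw [hkey]
      ring
    have iSing : Real.exp (μ*(m:ℝ) - μ - (m:ℝ))
        = Real.exp ((μ-1)*(m:ℝ)) * Real.exp (-(μ-1+1)) := by
      rw [← Real.exp_add]; congr 1 <;> ring
    have iTarget : μ/(μ-1) * A ^ (1/μ) * T ^ (1-1/μ)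
        = (1+1/(μ-1)) * (A * Real.exp ((μ-1)*(m:ℝ)) * Real.exp (-(μ-1)*((m:ℝ)-x))) := by
      have ht1 : t ^ (1-1/μ) = Real.exp ((μ-1)*(m:ℝ)) * Real.exp (-(μ-1)*((m:ℝ)-x)) := by
        rw [Real.rpow_def_of_pos ht, ← Real.exp_add]
        congr 1
        rw [← hμx]; field_simp; ring
      have hfrac : μ/(μ-1) = 1+1/(μ-1) := by field_simp; ring
      rw [mul_assoc, ← hconv, ht1, hfrac]; ring
    -- final assembly
    have hcoreAE := mul_le_mul_of_nonneg_left core hAE.le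
    rw [key1]
    calc T * Real.exp (-(m:ℝ))
          + ∑' k : ℕ, n (k+1) * (Real.exp (-((k:ℝ)+1)) - Real.exp (-(m:ℝ)))
        ≤ T * Real.exp (-(m:ℝ)) + ∑ k ∈ Finset.range (m-1),
            A * Real.exp (μ*((k:ℝ)+1)) * (Real.exp (-((k:ℝ)+1)) - Real.exp (-(m:ℝ))) := by
          linarith [key2]
      _ ≤ T * Real.exp (-(m:ℝ))
            + (A * (Real.exp ((μ-1)*(m:ℝ)) / (Real.exp (μ-1) - 1))
              - A * Real.exp (μ*(m:ℝ) - μ - (m:ℝ))) := by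
          rw [hsplit]
          linarith [hgeom, hsingle]
      _ ≤ μ/(μ-1) * A ^ (1/μ) * T ^ (1-1/μ) := by
          rw [iT, iGeom, iSing, iTarget]
          calc A * Real.exp ((μ-1)*(m:ℝ)) * Real.exp (-(μ-1+1)*((m:ℝ)-x))
                + (A * (Real.exp ((μ-1)*(m:ℝ))
                    * (Real.exp (-(μ-1)) / (1 - Real.exp (-(μ-1)))))
                  - A * (Real.exp ((μ-1)*(m:ℝ)) * Real.exp (-(μ-1+1))))
              = A * Real.exp ((μ-1)*(m:ℝ))
                  * (Real.exp (-(μ-1+1)*((m:ℝ)-x))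
                    + Real.exp (-(μ-1)) / (1 - Real.exp (-(μ-1)))
                    - Real.exp (-(μ-1+1))) := by ring
            _ ≤ A * Real.exp ((μ-1)*(m:ℝ))
                  * ((1+1/(μ-1)) * Real.exp (-(μ-1)*((m:ℝ)-x))) := hcoreAE
            _ = (1+1/(μ-1)) * (A * Real.exp ((μ-1)*(m:ℝ))
                  * Real.exp (-(μ-1)*((m:ℝ)-x))) := by ring
end

section
/- Let T ≥ 1 and suppose h : [0,∞) → [0,∞) is an integrable function satisfying ∫₀^∞ h(t) dt = T and h(t) ≤ e^{t} for all t ≥ 0. Then ∫₀^∞ h(t)·e^{−t} dt ≤ ln(T) + 1. -/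
open MeasureTheory

/-- If `h : [0,∞) → [0,∞)` is integrable with `∫₀^∞ h = T ≥ 1` and `h(t) ≤ e^{t}`,
then `∫₀^∞ h(t)e^{−t} dt ≤ ln(T) + 1`. -/
theorem integral_discounted_le_log {T : ℝ} (hT : 1 ≤ T)
    (h : ℝ → ℝ) (hnonneg : ∀ t, 0 ≤ t → 0 ≤ h t)
    (hint : IntegrableOn h (Set.Ici 0))
    (hsum : ∫ t in Set.Ici (0 : ℝ), h t = T)
    (hbound : ∀ t, 0 ≤ t → h t ≤ Real.exp t) :
    ∫ t in Set.Ici (0 : ℝ), h t * Real.exp (-t) ≤ Real.log T + 1 := by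
  set a := Real.log T with ha_def
  have ha : 0 ≤ a := Real.log_nonneg hT
  have hTpos : (0:ℝ) < T := lt_of_lt_of_le one_pos hT
  -- integrability of the discounted integrand
  have hint' : IntegrableOn (fun t => h t * Real.exp (-t)) (Set.Ici 0) := by
    apply Integrable.mono (hint.norm)
      ((hint.aestronglyMeasurable).mul
        ((Real.continuous_exp.comp continuous_neg).aestronglyMeasurable.restrict))
    filter_upwards [ae_restrict_mem measurableSet_Ici] with t ht
    have h0 : 0 ≤ h t := hnonneg t ht
    have he : Real.exp (-t) ≤ 1 := Real.exp_le_one_iff.mpr (neg_nonpos.mpr ht)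
    simp only [Pi.mul_apply, Function.comp_apply, norm_norm, Real.norm_eq_abs]
    rw [abs_of_nonneg (mul_nonneg h0 (Real.exp_pos _).le), abs_of_nonneg h0]
    calc h t * Real.exp (-t) ≤ h t * 1 := by
          exact mul_le_mul_of_nonneg_left he h0
      _ = h t := mul_one _
      _ ≤ |h t| := le_abs_self _
  -- split the domain
  have hsplit : Set.Ico (0:ℝ) a ∪ Set.Ici a = Set.Ici 0 := Set.Ico_union_Ici_eq_Ici ha
  have hdisj : Disjoint (Set.Ico (0:ℝ) a) (Set.Ici a) := by
    apply Set.disjoint_left.mpr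
    intro x hx hx'
    exact absurd hx' (not_le.mpr hx.2)
  rw [← hsplit, setIntegral_union hdisj measurableSet_Ici
      (hint'.mono_set (hsplit ▸ Set.subset_union_left))
      (hint'.mono_set (hsplit ▸ Set.subset_union_right))]
  have h1 : ∫ t in Set.Ico (0:ℝ) a, h t * Real.exp (-t) ≤ a := by
    have : ∫ t in Set.Ico (0:ℝ) a, h t * Real.exp (-t) ≤ ∫ _t in Set.Ico (0:ℝ) a, (1:ℝ) := by
      apply setIntegral_mono_on (hint'.mono_set (hsplit ▸ Set.subset_union_left))
        ((integrableOn_const_iff (by finiteness)).mpr (Or.inr measure_Ico_lt_top)) measurableSet_Ico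
      intro t ht
      calc h t * Real.exp (-t) ≤ Real.exp t * Real.exp (-t) :=
            mul_le_mul_of_nonneg_right (hbound t ht.1) (Real.exp_pos _).le
        _ = 1 := by rw [← Real.exp_add, add_neg_cancel, Real.exp_zero]
    calc ∫ t in Set.Ico (0:ℝ) a, h t * Real.exp (-t) ≤ ∫ _t in Set.Ico (0:ℝ) a, (1:ℝ) := this
      _ = a := by simp [Real.volume_Ico, ha]
  have h2 : ∫ t in Set.Ici a, h t * Real.exp (-t) ≤ 1 := by
    have hle : ∫ t in Set.Ici a, h t * Real.exp (-t) ≤ ∫ t in Set.Ici a, h t * (1/T) := by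
      apply setIntegral_mono_on (hint'.mono_set (hsplit ▸ Set.subset_union_right))
        (((hint.mono_set (hsplit ▸ Set.subset_union_right)).mul_const _)) measurableSet_Ici
      intro t ht
      have h0 : 0 ≤ h t := hnonneg t (le_trans ha ht)
      have : Real.exp (-t) ≤ 1/T := by
        rw [← Real.exp_log hTpos, one_div, ← Real.exp_neg]
        exact Real.exp_le_exp.mpr (neg_le_neg ht)
      exact mul_le_mul_of_nonneg_left this h0
    have hle2 : ∫ t in Set.Ici a, h t ≤ T := by
      rw [← hsum]
      apply setIntegral_mono_set hint
      · filter_upwards [ae_restrict_mem measurableSet_Ici] with t ht using hnonneg t ht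
      · exact HasSubset.Subset.eventuallyLE (Set.Ici_subset_Ici.mpr ha)
    calc ∫ t in Set.Ici a, h t * Real.exp (-t) ≤ ∫ t in Set.Ici a, h t * (1/T) := hle
      _ = (∫ t in Set.Ici a, h t) * (1/T) := by rw [integral_mul_const]
      _ ≤ T * (1/T) := by
          apply mul_le_mul_of_nonneg_right hle2
          positivity
      _ = 1 := by field_simp
  linarith
end

section
/- Let A > 0 and T > 0, and suppose (n_k)_{k≥1} is a sequence of nonnegative real numbers with ∑_{k=1}^∞ n_k = T and n_k ≤ A·e^{k} for all k ≥ 1. Then ∑_{k=1}^∞ n_k·e^{−k} ≤ T if T < A, and ∑_{k=1}^∞ n_k·e^{−k} ≤ A·(ln(T/A) + 1) if T ≥ A. -/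
open Finset Real

/- Split the series at an index `m`: each of the first `m` terms is at most `A`, and the tail
is at most `T · w m` because the weights decrease. For `w k = e^{-(k+1)}` and `T ≥ A`, the choice
`m = ⌊ln (T/A)⌋` makes `T · w m ≤ A`, so the total is at most `(m + 1) A ≤ A (ln (T/A) + 1)`;
the case `T < A` is `m = 0`. -/

theorem tsum_mul_le_of_antitone {a w : ℕ → ℝ} {A T : ℝ} (ha : ∀ k, 0 ≤ a k)
    (hsum : HasSum a T) (hw : Antitone w) (hw0 : ∀ k, 0 ≤ w k) (hbound : ∀ k, a k * w k ≤ A)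
    (m : ℕ) : ∑' k, a k * w k ≤ m * A + T * w m := by
  let head : ℕ → ℝ := fun k => if k < m then A else 0
  have hhead : HasSum head (m * A) := by
    have h := hasSum_sum_of_ne_finset_zero (L := .unconditional ℕ) (s := range m) (f := head)
      fun k hk => if_neg (by simpa using hk)
    rwa [sum_congr rfl fun k hk => if_pos (mem_range.1 hk), sum_const, card_range,
      nsmul_eq_mul] at h
  have hsplit : ∀ k, a k * w k ≤ head k + a k * w m := fun k => by
    by_cases hk : k < m
    · simpa [head, hk] using add_le_add (hbound k) (mul_nonneg (ha k) (hw0 m))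
    · simpa [head, hk] using mul_le_mul_of_nonneg_left (hw (not_lt.1 hk)) (ha k)
  have hsummable : Summable fun k => a k * w k :=
    .of_nonneg_of_le (fun k => mul_nonneg (ha k) (hw0 k))
      (fun k => mul_le_mul_of_nonneg_left (hw (Nat.zero_le k)) (ha k))
      (hsum.summable.mul_right (w 0))
  exact hasSum_le hsplit hsummable.hasSum (hhead.add (hsum.mul_right (w m)))

theorem antitone_exp_neg_succ : Antitone fun k : ℕ => exp (-((k : ℝ) + 1)) :=
  fun _ _ hkl => exp_le_exp.2 (by gcongr)

theorem tsum_mul_exp_neg_succ_le {a : ℕ → ℝ} {A T : ℝ} (ha : ∀ k, 0 ≤ a k) (hsum : HasSum a T)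
    (hbound : ∀ k, a k ≤ A * exp ((k : ℝ) + 1)) (m : ℕ) :
    ∑' k, a k * exp (-((k : ℝ) + 1)) ≤ m * A + T * exp (-((m : ℝ) + 1)) :=
  tsum_mul_le_of_antitone ha hsum antitone_exp_neg_succ (fun _ => (exp_pos _).le)
    (fun k => calc
      a k * exp (-((k : ℝ) + 1)) ≤ A * exp ((k : ℝ) + 1) * exp (-((k : ℝ) + 1)) := by
        gcongr; exact hbound k
      _ = A := by rw [mul_assoc, ← exp_add, add_neg_cancel, exp_zero, mul_one]) m

theorem mul_exp_neg_floor_log_div_le {A T : ℝ} (hA : 0 < A) (hAT : A ≤ T) :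
    T * exp (-((⌊log (T / A)⌋₊ : ℝ) + 1)) ≤ A := by
  have hT : T = A * exp (log (T / A)) := by
    rw [exp_log (div_pos (hA.trans_le hAT) hA), mul_div_cancel₀ _ hA.ne']
  have hlt : log (T / A) < ⌊log (T / A)⌋₊ + 1 := Nat.lt_floor_add_one _
  calc T * exp (-((⌊log (T / A)⌋₊ : ℝ) + 1))
      = A * exp (log (T / A) - (⌊log (T / A)⌋₊ + 1)) := by
        rw [hT, mul_assoc, ← exp_add, ← sub_eq_add_neg, ← hT]
    _ ≤ A * 1 := by gcongr; exact exp_le_one_iff.2 (by linarith)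
    _ = A := mul_one A

theorem tsum_discounted_le_log_general {A T : ℝ} (hA : 0 < A)
    (n : ℕ → ℝ) (hnonneg : ∀ k, 1 ≤ k → 0 ≤ n k)
    (hsum : HasSum (fun k : ℕ => n (k + 1)) T)
    (hbound : ∀ k, 1 ≤ k → n k ≤ A * Real.exp k) :
    (T < A → ∑' k : ℕ, n (k + 1) * Real.exp (-((k : ℝ) + 1)) ≤ T) ∧
    (A ≤ T → ∑' k : ℕ, n (k + 1) * Real.exp (-((k : ℝ) + 1))
      ≤ A * (Real.log (T / A) + 1)) := by
  have ha : ∀ k, 0 ≤ n (k + 1) := fun k => hnonneg (k + 1) k.succ_pos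
  have hsplit := tsum_mul_exp_neg_succ_le ha hsum fun k => by
    exact_mod_cast hbound (k + 1) k.succ_pos
  refine ⟨fun _ => ?_, fun hAT => ?_⟩
  · have hT : 0 ≤ T := hsum.nonneg ha
    have he : exp (-((0 : ℝ) + 1)) ≤ 1 := exp_le_one_iff.2 (by norm_num)
    have h0 := hsplit 0
    rw [Nat.cast_zero, zero_mul, zero_add] at h0
    nlinarith
  · have hfloor : (⌊log (T / A)⌋₊ : ℝ) ≤ log (T / A) :=
      Nat.floor_le (log_nonneg ((one_le_div hA).2 hAT))
    nlinarith [hsplit ⌊log (T / A)⌋₊, mul_exp_neg_floor_log_div_le hA hAT]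

/-- If `(n_k)_{k≥1}` are nonnegative reals with `∑ n_k = T` and `n_k ≤ A·e^{k}`, then
`∑ n_k·e^{−k} ≤ T` when `T < A`, and `∑ n_k·e^{−k} ≤ A·(ln(T/A) + 1)` when `T ≥ A`. -/
theorem tsum_discounted_le_log {A T : ℝ} (hA : 0 < A) (hT : 0 < T)
    (n : ℕ → ℝ) (hnonneg : ∀ k, 1 ≤ k → 0 ≤ n k)
    (hsum : HasSum (fun k : ℕ => n (k + 1)) T)
    (hbound : ∀ k, 1 ≤ k → n k ≤ A * Real.exp k) :
    (T < A → ∑' k : ℕ, n (k + 1) * Real.exp (-((k : ℝ) + 1)) ≤ T) ∧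
    (A ≤ T → ∑' k : ℕ, n (k + 1) * Real.exp (-((k : ℝ) + 1))
      ≤ A * (Real.log (T / A) + 1)) :=
  tsum_discounted_le_log_general hA n hnonneg hsum hbound
end

section
/- Let d ≥ 3 be an integer, let Λ > 0 and M₀ > 0, let T ≥ 1 be a natural number, and let ρ_1, …, ρ_T be real numbers with 0 ≤ ρ_t ≤ Λ for all t. Suppose that for every δ > 0, the number of indices t ∈ {1, …, T} with ρ_t > δ is at most M₀·δ^{−d/2}. Then (1/T)·∑_{t=1}^T ρ_t ≤ e·(d/(d−2))·M₀^{2/d}·T^{−2/d}; equivalently, the cumulative sum satisfies ∑_{t=1}^T ρ_t ≤ e·(d/(d−2))·M₀^{2/d}·T^{1−2/d}. -/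
/-- Abstract average-regret upper bound, `d ≥ 3`: if `0 ≤ ρ_t ≤ Λ` and for every `δ > 0`
at most `M₀·δ^{−d/2}` of the indices `t ∈ {1,…,T}` satisfy `ρ_t > δ`, then
`(1/T)·∑ ρ_t ≤ e·(d/(d−2))·M₀^{2/d}·T^{−2/d}`, equivalently
`∑ ρ_t ≤ e·(d/(d−2))·M₀^{2/d}·T^{1−2/d}`. -/
theorem average_regret_upper_bound {d : ℕ} (hd : 3 ≤ d) (Λ M₀ : ℝ)
    (hΛ : 0 < Λ) (hM₀ : 0 < M₀) (T : ℕ) (hT : 1 ≤ T)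
    (ρ : ℕ → ℝ) (hρ0 : ∀ t ∈ Finset.Icc 1 T, 0 ≤ ρ t)
    (hρΛ : ∀ t ∈ Finset.Icc 1 T, ρ t ≤ Λ)
    (hcount : ∀ δ : ℝ, 0 < δ →
      (((Finset.Icc 1 T).filter fun t => δ < ρ t).card : ℝ)
        ≤ M₀ * δ ^ (-(d : ℝ) / 2)) :
    (1 / (T : ℝ)) * ∑ t ∈ Finset.Icc 1 T, ρ t
      ≤ Real.exp 1 * ((d : ℝ) / ((d : ℝ) - 2)) * M₀ ^ (2 / (d : ℝ))
        * (T : ℝ) ^ (-2 / (d : ℝ)) ∧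
    ∑ t ∈ Finset.Icc 1 T, ρ t
      ≤ Real.exp 1 * ((d : ℝ) / ((d : ℝ) - 2)) * M₀ ^ (2 / (d : ℝ))
        * (T : ℝ) ^ (1 - 2 / (d : ℝ)) := by
  have hTpos : (0:ℝ) < T := by exact_mod_cast Nat.lt_of_lt_of_le Nat.zero_lt_one hT
  have hdr : (3:ℝ) ≤ (d:ℝ) := by exact_mod_cast hd
  have hdpos : (0:ℝ) < (d:ℝ) := by linarith
  have hd2 : (0:ℝ) < (d:ℝ) - 2 := by linarith
  set p : ℝ := 2 / (d:ℝ) with hp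
  have hppos : 0 < p := by positivity
  have hδ₀pos : (0:ℝ) < (M₀ / T) ^ p := Real.rpow_pos_of_pos (div_pos hM₀ hTpos) p
  set δ₀ : ℝ := (M₀ / T) ^ p with hδ₀def
  set F : ℝ → ℝ :=
    fun δ => ∑ t ∈ Finset.Icc 1 T, (Set.Ioo (0:ℝ) (ρ t)).indicator (fun _ => (1:ℝ)) δ
    with hF
  have hint : ∀ t : ℕ,
      MeasureTheory.Integrable ((Set.Ioo (0:ℝ) (ρ t)).indicator fun _ => (1:ℝ)) :=
    fun t => MeasureTheory.IntegrableOn.integrable_indicator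
      (MeasureTheory.integrableOn_const measure_Ioo_lt_top.ne enorm_ne_top) measurableSet_Ioo
  have hFint : MeasureTheory.IntegrableOn F (Set.Ioi (0:ℝ)) :=
    (MeasureTheory.integrable_finset_sum _ fun t _ => hint t).integrableOn
  -- layer cake: the sum is the integral of F over (0, ∞)
  have hS : ∑ t ∈ Finset.Icc 1 T, ρ t = ∫ δ in Set.Ioi (0:ℝ), F δ := by
    rw [hF, MeasureTheory.integral_finset_sum _ fun t _ => (hint t).integrableOn]
    refine Finset.sum_congr rfl fun t ht => ?_
    rw [MeasureTheory.setIntegral_indicator measurableSet_Ioo,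
      Set.inter_eq_right.2 Set.Ioo_subset_Ioi_self, MeasureTheory.setIntegral_const,
      MeasureTheory.measureReal_def, Real.volume_Ioo, sub_zero, smul_eq_mul, mul_one,
      ENNReal.toReal_ofReal (hρ0 t ht)]
  -- F is the counting function
  have hFcard : ∀ δ : ℝ, 0 < δ →
      F δ = (((Finset.Icc 1 T).filter fun t => δ < ρ t).card : ℝ) := by
    intro δ hδ
    rw [hF, ← Finset.sum_boole]
    exact Finset.sum_congr rfl fun t _ => by
      simp [Set.indicator_apply, Set.mem_Ioo, hδ]
  have hFleT : ∀ δ : ℝ, F δ ≤ (T:ℝ) := by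
    intro δ
    have : F δ ≤ ∑ t ∈ Finset.Icc 1 T, (1:ℝ) :=
      Finset.sum_le_sum fun t _ => by
        by_cases h : δ ∈ Set.Ioo (0:ℝ) (ρ t) <;> simp [Set.indicator_apply, h]
    simpa using this
  -- split the integral at δ₀
  have hsplit : ∫ δ in Set.Ioi (0:ℝ), F δ
      = (∫ δ in Set.Ioc 0 δ₀, F δ) + ∫ δ in Set.Ioi δ₀, F δ := by
    rw [← MeasureTheory.setIntegral_union (Set.Ioc_disjoint_Ioi le_rfl) measurableSet_Ioi
      (hFint.mono_set Set.Ioc_subset_Ioi_self)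
      (hFint.mono_set (Set.Ioi_subset_Ioi hδ₀pos.le)),
      Set.Ioc_union_Ioi_eq_Ioi hδ₀pos.le]
  have hb1 : ∫ δ in Set.Ioc 0 δ₀, F δ ≤ (T:ℝ) * δ₀ := by
    have h := MeasureTheory.setIntegral_mono_on (s := Set.Ioc 0 δ₀)
      (hFint.mono_set Set.Ioc_subset_Ioi_self)
      (MeasureTheory.integrableOn_const measure_Ioc_lt_top.ne enorm_ne_top) measurableSet_Ioc
      (fun δ _ => hFleT δ)
    rwa [MeasureTheory.setIntegral_const, MeasureTheory.measureReal_def, Real.volume_Ioc, sub_zero, smul_eq_mul,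
      ENNReal.toReal_ofReal hδ₀pos.le, mul_comm] at h
  have ha : -(d:ℝ)/2 < -1 := by
    rw [div_lt_iff₀ (by norm_num : (0:ℝ) < 2)]; linarith
  have hrint : MeasureTheory.IntegrableOn (fun δ : ℝ => M₀ * δ ^ (-(d:ℝ)/2))
      (Set.Ioi δ₀) := (integrableOn_Ioi_rpow_of_lt ha hδ₀pos).const_mul M₀
  have hb2 : ∫ δ in Set.Ioi δ₀, F δ ≤ M₀ * (2/((d:ℝ)-2)) * δ₀ ^ (1 - (d:ℝ)/2) := by
    have hle : ∫ δ in Set.Ioi δ₀, F δ ≤ ∫ δ in Set.Ioi δ₀, M₀ * δ ^ (-(d:ℝ)/2) :=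
      MeasureTheory.setIntegral_mono_on (hFint.mono_set (Set.Ioi_subset_Ioi hδ₀pos.le))
        hrint measurableSet_Ioi
        (fun δ hδ => by
          rw [hFcard δ (hδ₀pos.trans hδ)]; exact hcount δ (hδ₀pos.trans hδ))
    rw [MeasureTheory.integral_const_mul, integral_Ioi_rpow_of_lt ha hδ₀pos] at hle
    have heq : ∀ X : ℝ, M₀ * (-X / (-(d:ℝ)/2 + 1)) = M₀ * (2/((d:ℝ)-2)) * X := by
      intro X
      have h1 : -(d:ℝ)/2 + 1 ≠ 0 := by intro h; apply hd2.ne'; linarith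
      have h2 : (2:ℝ) - (d:ℝ) ≠ 0 := by intro h; apply hd2.ne'; linarith
      have h3 : ((2:ℝ) - (d:ℝ)) * ((2:ℝ) - (d:ℝ))⁻¹ = 1 := mul_inv_cancel₀ h2
      field_simp
      linear_combination X * h3
    rw [heq (δ₀ ^ (-(d:ℝ)/2 + 1))] at hle
    rwa [show -(d:ℝ)/2 + 1 = 1 - (d:ℝ)/2 by ring] at hle
  -- arithmetic identities
  have e1 : (T:ℝ) * δ₀ = M₀ ^ p * (T:ℝ) ^ (1 - p) := by
    rw [hδ₀def, Real.div_rpow hM₀.le hTpos.le, Real.rpow_sub hTpos, Real.rpow_one]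
    ring
  have e2 : δ₀ ^ (1 - (d:ℝ)/2) = M₀ ^ (p - 1) * (T:ℝ) ^ (1 - p) := by
    rw [hδ₀def, ← Real.rpow_mul (div_pos hM₀ hTpos).le,
      show p * (1 - (d:ℝ)/2) = p - 1 by rw [hp]; field_simp,
      Real.div_rpow hM₀.le hTpos.le, show p - 1 = -(1 - p) by ring,
      Real.rpow_neg hTpos.le, div_eq_mul_inv, inv_inv]
  have e3 : M₀ * M₀ ^ (p - 1) = M₀ ^ p := by
    have h := Real.rpow_add hM₀ 1 (p - 1)
    rw [Real.rpow_one] at h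
    rw [← h]
    congr 1
    ring
  -- the key bound
  have key : ∑ t ∈ Finset.Icc 1 T, ρ t
      ≤ ((d:ℝ)/((d:ℝ)-2)) * M₀ ^ p * (T:ℝ) ^ (1 - p) := by
    rw [hS, hsplit]
    have : (T:ℝ) * δ₀ + M₀ * (2/((d:ℝ)-2)) * δ₀ ^ (1 - (d:ℝ)/2)
        = ((d:ℝ)/((d:ℝ)-2)) * M₀ ^ p * (T:ℝ) ^ (1 - p) := by
      rw [e1, e2, ← e3]
      field_simp
      ring
    linarith [hb1, hb2]
  have hexp : (1:ℝ) ≤ Real.exp 1 := by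
    nlinarith [Real.add_one_le_exp (1:ℝ)]
  have hCpos : (0:ℝ) ≤ ((d:ℝ)/((d:ℝ)-2)) * M₀ ^ p * (T:ℝ) ^ (1 - p) := by positivity
  have key2 : ∑ t ∈ Finset.Icc 1 T, ρ t
      ≤ Real.exp 1 * (((d:ℝ)/((d:ℝ)-2)) * M₀ ^ p * (T:ℝ) ^ (1 - p)) := by
    nlinarith [key, hCpos, hexp]
  constructor
  · have hT1p : (T:ℝ) ^ (1 - p) = (T:ℝ) * (T:ℝ) ^ (-p) := by
      have h := Real.rpow_add hTpos 1 (-p)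
      rw [Real.rpow_one] at h
      rw [show 1 - p = 1 + -p by ring, h]
    have hsum0 : 0 ≤ ∑ t ∈ Finset.Icc 1 T, ρ t := Finset.sum_nonneg hρ0
    rw [show -2 / (d:ℝ) = -p by rw [hp]; ring]
    rw [hT1p] at key2
    rw [div_mul_eq_mul_div, div_le_iff₀ hTpos, one_mul]
    calc ∑ t ∈ Finset.Icc 1 T, ρ t
        ≤ Real.exp 1 * (((d:ℝ)/((d:ℝ)-2)) * M₀ ^ p * ((T:ℝ) * (T:ℝ) ^ (-p))) := key2
      _ = Real.exp 1 * ((d:ℝ)/((d:ℝ)-2)) * M₀ ^ p * (T:ℝ) ^ (-p) * (T:ℝ) := by ring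
  · calc ∑ t ∈ Finset.Icc 1 T, ρ t
        ≤ Real.exp 1 * (((d:ℝ)/((d:ℝ)-2)) * M₀ ^ p * (T:ℝ) ^ (1 - p)) := key2
      _ = Real.exp 1 * ((d:ℝ)/((d:ℝ)-2)) * M₀ ^ p * (T:ℝ) ^ (1 - p) := by ring
end

section
/- Let Λ > 0 and M₀ > 0, let T be a natural number with T ≥ M₀/Λ and T ≥ 1, and let ρ_1, …, ρ_T be real numbers with 0 ≤ ρ_t ≤ Λ for all t. Suppose that for every δ > 0, the number of indices t ∈ {1, …, T} with ρ_t > δ is at most M₀/δ. Then (1/T)·∑_{t=1}^T ρ_t ≤ (e·M₀/T)·(ln(Λ·T/M₀) + 1). In particular, the cumulative sum ∑_{t=1}^T ρ_t grows at most logarithmically in T and is hence sublinear. -/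
/-- Abstract average-regret upper bound in dimension `d = 2`: if `0 ≤ ρ_t ≤ Λ`,
`T ≥ M₀/Λ`, and for every `δ > 0` at most `M₀/δ` of the indices `t ∈ {1,…,T}` satisfy
`ρ_t > δ`, then `(1/T)·∑ ρ_t ≤ (e·M₀/T)·(ln(Λ·T/M₀) + 1)`. -/
theorem average_regret_upper_bound_dim_two (Λ M₀ : ℝ)
    (hΛ : 0 < Λ) (hM₀ : 0 < M₀) (T : ℕ) (hT : 1 ≤ T) (hTM : M₀ / Λ ≤ (T : ℝ))
    (ρ : ℕ → ℝ) (hρ0 : ∀ t ∈ Finset.Icc 1 T, 0 ≤ ρ t)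
    (hρΛ : ∀ t ∈ Finset.Icc 1 T, ρ t ≤ Λ)
    (hcount : ∀ δ : ℝ, 0 < δ →
      (((Finset.Icc 1 T).filter fun t => δ < ρ t).card : ℝ) ≤ M₀ / δ) :
    (1 / (T : ℝ)) * ∑ t ∈ Finset.Icc 1 T, ρ t
      ≤ Real.exp 1 * M₀ / (T : ℝ) * (Real.log (Λ * (T : ℝ) / M₀) + 1) := by
  have hT0 : (0:ℝ) < T := by exact_mod_cast Nat.lt_of_lt_of_le Nat.zero_lt_one hT
  set a : ℝ := M₀ / T with ha_def
  have ha : 0 < a := div_pos hM₀ hT0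
  have hMT : M₀ ≤ Λ * T := by
    have h := (div_le_iff₀ hΛ).mp hTM
    nlinarith
  have hab : a ≤ Λ := by
    rw [ha_def, div_le_iff₀ hT0]; linarith
  set g : ℕ → ℝ → ℝ := fun t s => (Set.Iio (ρ t)).indicator (fun _ => (1:ℝ)) s with hg
  have hgint : ∀ t, IntervalIntegrable (g t) MeasureTheory.volume a Λ := by
    intro t
    rw [intervalIntegrable_iff]
    exact (MeasureTheory.integrableOn_const
      measure_Ioc_lt_top.ne).indicator measurableSet_Iio
  -- per-index bound
  have hkey : ∀ t ∈ Finset.Icc 1 T, ρ t ≤ a + ∫ s in a..Λ, g t s := by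
    intro t ht
    rcases le_or_gt (ρ t) a with h | h
    · have h0 : 0 ≤ ∫ s in a..Λ, g t s := by
        apply intervalIntegral.integral_nonneg hab
        intro s _
        exact Set.indicator_nonneg (fun _ _ => zero_le_one) s
      linarith
    · have hval : ∫ s in a..Λ, g t s = ρ t - a := by
        rw [hg]
        simp only
        rw [intervalIntegral.integral_of_le hab,
          MeasureTheory.setIntegral_indicator measurableSet_Iio,
          MeasureTheory.setIntegral_const]
        have hset : Set.Ioc a Λ ∩ Set.Iio (ρ t) = Set.Ioo a (ρ t) := by
          ext x
          simp only [Set.mem_inter_iff, Set.mem_Ioc, Set.mem_Iio, Set.mem_Ioo]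
          constructor
          · rintro ⟨⟨h1, _⟩, h3⟩; exact ⟨h1, h3⟩
          · rintro ⟨h1, h2⟩; exact ⟨⟨h1, le_trans (le_of_lt h2) (hρΛ t ht)⟩, h2⟩
        rw [hset, Real.volume_real_Ioo_of_le (by linarith), smul_eq_mul]
        ring
      rw [hval]; linarith
  -- sum the per-index bounds
  have hsum1 : ∑ t ∈ Finset.Icc 1 T, ρ t
      ≤ (T : ℝ) * a + ∫ s in a..Λ, ∑ t ∈ Finset.Icc 1 T, g t s := by
    calc ∑ t ∈ Finset.Icc 1 T, ρ t
        ≤ ∑ t ∈ Finset.Icc 1 T, (a + ∫ s in a..Λ, g t s) := Finset.sum_le_sum hkey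
      _ = (T : ℝ) * a + ∑ t ∈ Finset.Icc 1 T, ∫ s in a..Λ, g t s := by
          rw [Finset.sum_add_distrib, Finset.sum_const, Nat.card_Icc]
          simp [nsmul_eq_mul]
      _ = (T : ℝ) * a + ∫ s in a..Λ, ∑ t ∈ Finset.Icc 1 T, g t s := by
          rw [intervalIntegral.integral_finset_sum (fun t _ => hgint t)]
  -- bound the integral by ∫ M₀/s
  have hmono : (∫ s in a..Λ, ∑ t ∈ Finset.Icc 1 T, g t s)
      ≤ ∫ s in a..Λ, M₀ * s⁻¹ := by
    have hFint : IntervalIntegrable (fun s => ∑ t ∈ Finset.Icc 1 T, g t s)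
        MeasureTheory.volume a Λ := by
      have := IntervalIntegrable.sum (Finset.Icc 1 T) (μ := MeasureTheory.volume)
        (a := a) (b := Λ) (fun t _ => hgint t)
      have heq : (fun s => ∑ t ∈ Finset.Icc 1 T, g t s) = ∑ i ∈ Finset.Icc 1 T, g i := by
        ext s; simp
      rw [heq]; exact this
    apply intervalIntegral.integral_mono_on hab hFint
    · apply ContinuousOn.intervalIntegrable
      apply ContinuousOn.mul continuousOn_const
      apply ContinuousOn.inv₀ continuousOn_id
      intro s hs
      rw [Set.uIcc_of_le hab] at hs
      exact ne_of_gt (lt_of_lt_of_le ha hs.1)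
    · intro s hs
      have hs0 : 0 < s := lt_of_lt_of_le ha hs.1
      have heq : ∑ t ∈ Finset.Icc 1 T, g t s
          = (((Finset.Icc 1 T).filter fun t => s < ρ t).card : ℝ) := by
        rw [hg]
        simp only [Set.indicator_apply, Set.mem_Iio]
        rw [Finset.sum_boole]
      rw [heq]
      calc (((Finset.Icc 1 T).filter fun t => s < ρ t).card : ℝ)
          ≤ M₀ / s := hcount s hs0
        _ = M₀ * s⁻¹ := div_eq_mul_inv M₀ s
  have hint : ∫ s in a..Λ, M₀ * s⁻¹ = M₀ * Real.log (Λ * (T:ℝ) / M₀) := by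
    rw [intervalIntegral.integral_const_mul, integral_inv]
    · congr 1
      rw [ha_def]
      field_simp
    · rw [Set.uIcc_of_le hab]
      intro h0
      exact absurd h0.1 (not_le.mpr ha)
  have hTa : (T:ℝ) * a = M₀ := by rw [ha_def]; field_simp
  have hS : ∑ t ∈ Finset.Icc 1 T, ρ t ≤ M₀ * (Real.log (Λ * (T:ℝ) / M₀) + 1) := by
    have := hsum1.trans (by linarith [hmono, hint.le] : (T : ℝ) * a + (∫ s in a..Λ, ∑ t ∈ Finset.Icc 1 T, g t s) ≤ (T:ℝ)*a + M₀ * Real.log (Λ * (T:ℝ) / M₀))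
    rw [hTa] at this
    linarith
  -- final arithmetic
  have hL : 0 ≤ Real.log (Λ * (T:ℝ) / M₀) := by
    apply Real.log_nonneg
    rw [le_div_iff₀ hM₀]
    linarith
  have he : (1:ℝ) ≤ Real.exp 1 := by
    have := Real.add_one_le_exp (1:ℝ)
    linarith
  rw [div_mul_eq_mul_div, one_mul, div_le_iff₀ hT0]
  have h2 : Real.exp 1 * M₀ / (T:ℝ) * (Real.log (Λ * (T:ℝ) / M₀) + 1) * (T:ℝ)
      = Real.exp 1 * M₀ * (Real.log (Λ * (T:ℝ) / M₀) + 1) := by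
    field_simp
  rw [h2]
  nlinarith [mul_nonneg (mul_nonneg (sub_nonneg.mpr he) hM₀.le)
    (by linarith : (0:ℝ) ≤ Real.log (Λ * (T:ℝ) / M₀) + 1)]
end

section
/- Let Z ⊂ ℝ^{nZ} and U ⊂ ℝ^{nU} be nonempty sets, let C : ℝ^{nZ+nU} → ℝ be differentiable with L-Lipschitz gradient for some L > 0, let q_0, …, q_{t−1} ∈ ℝ^{nZ+nU} be data points, and let α, β ∈ ℝ with α ≤ 0 and α + β > 0. Fix z ∈ Z and suppose u ∈ U minimizes u' ↦ m_{t,α,β}(z, u') over U and u* ∈ U minimizes u' ↦ C(z, u') over U. Then the regret satisfies C(z, u) − C(z, u*) ≤ L·(1 + |α|/(α+β))·min_{0≤i≤t−1} ‖(z, u) − q_i‖². -/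
section Aux


open InnerProductSpace

variable {F : Type*} [NormedAddCommGroup F] [InnerProductSpace ℝ F] [CompleteSpace F]

lemma descent_upper (f : F → ℝ) (L : ℝ) (hdiff : Differentiable ℝ f)
    (hlip : ∀ x y, ‖gradient f y - gradient f x‖ ≤ L * ‖y - x‖) (x y : F) :
    f y ≤ f x + inner ℝ (gradient f x) (y - x) + L / 2 * ‖y - x‖ ^ 2 := by
  set v := y - x with hv
  set c : ℝ := inner ℝ (gradient f x) v with hc
  set g : ℝ → ℝ := fun τ => f (x + τ • v) - τ * c - L / 2 * ‖v‖ ^ 2 * τ ^ 2 with hgdef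
  have hcurve : ∀ τ : ℝ, HasDerivAt (fun τ : ℝ => x + τ • v) v τ := by
    intro τ
    simpa using ((hasDerivAt_id τ).smul_const v).const_add x
  have hDg : ∀ τ : ℝ, HasDerivAt g
      ((inner ℝ (gradient f (x + τ • v)) v : ℝ) - c - L / 2 * ‖v‖ ^ 2 * (2 * τ)) τ := by
    intro τ
    have h1 : HasDerivAt (fun τ : ℝ => f (x + τ • v))
        ((inner ℝ (gradient f (x + τ • v)) v : ℝ)) τ := by
      have := ((hdiff (x + τ • v)).hasGradientAt.hasFDerivAt).comp_hasDerivAt τ (hcurve τ)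
      rw [InnerProductSpace.toDual_apply_apply] at this
      exact this
    have h2 : HasDerivAt (fun τ : ℝ => τ * c) c τ := by
      simpa using (hasDerivAt_id τ).mul_const c
    have h3 : HasDerivAt (fun τ : ℝ => L / 2 * ‖v‖ ^ 2 * τ ^ 2)
        (L / 2 * ‖v‖ ^ 2 * (2 * τ)) τ := by
      simpa [pow_one] using (hasDerivAt_pow 2 τ).const_mul (L / 2 * ‖v‖ ^ 2)
    exact (h1.sub h2).sub h3
  have hanti : AntitoneOn g (Set.Icc (0:ℝ) 1) := by
    apply antitoneOn_of_deriv_nonpos (convex_Icc 0 1)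
    · exact fun τ _ => ((hDg τ).continuousAt).continuousWithinAt
    · exact fun τ _ => ((hDg τ).differentiableAt).differentiableWithinAt
    · intro τ hτ
      rw [interior_Icc] at hτ
      rw [(hDg τ).deriv]
      have hτ0 : (0:ℝ) ≤ τ := le_of_lt hτ.1
      have h4 : (inner ℝ (gradient f (x + τ • v)) v : ℝ) - c
          ≤ ‖gradient f (x + τ • v) - gradient f x‖ * ‖v‖ := by
        rw [hc, ← inner_sub_left]
        exact real_inner_le_norm _ _
      have h5 : ‖gradient f (x + τ • v) - gradient f x‖ ≤ L * (τ * ‖v‖) := by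
        have := hlip x (x + τ • v)
        simpa [norm_smul, abs_of_nonneg hτ0] using this
      have hvnn : (0:ℝ) ≤ ‖v‖ := norm_nonneg _
      nlinarith [norm_nonneg (gradient f (x + τ • v) - gradient f x)]
  have h01 := hanti (Set.mem_Icc.mpr ⟨le_refl 0, zero_le_one⟩)
      (Set.mem_Icc.mpr ⟨zero_le_one, le_refl 1⟩) zero_le_one
  have hg0 : g 0 = f x := by simp [hgdef]
  have hg1 : g 1 = f y - c - L / 2 * ‖v‖ ^ 2 := by simp [hgdef, hv]
  rw [hg0, hg1] at h01
  linarith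

lemma gradient_neg' (f : F → ℝ) (hdiff : Differentiable ℝ f) (p : F) :
    gradient (fun w => -f w) p = -gradient f p := by
  have h : HasFDerivAt (fun w => -f w) (-(toDual ℝ F (gradient f p))) p :=
    ((hdiff p).hasGradientAt.hasFDerivAt).neg
  rw [← map_neg] at h
  rw [h.hasGradientAt.gradient, LinearIsometryEquiv.symm_apply_apply]

lemma descent_abs (f : F → ℝ) (L : ℝ) (hdiff : Differentiable ℝ f)
    (hlip : ∀ x y, ‖gradient f y - gradient f x‖ ≤ L * ‖y - x‖) (x y : F) :
    |f y - (f x + inner ℝ (gradient f x) (y - x))| ≤ L / 2 * ‖y - x‖ ^ 2 := by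
  have hlip' : ∀ a b : F, ‖gradient (fun w => -f w) b - gradient (fun w => -f w) a‖ ≤ L * ‖b - a‖ := by
    intro a b
    rw [gradient_neg' f hdiff, gradient_neg' f hdiff,
      show -gradient f b - -gradient f a = -(gradient f b - gradient f a) by abel, norm_neg]
    exact hlip a b
  rw [abs_le]
  constructor
  · have h := descent_upper (fun w => -f w) L hdiff.neg hlip' x y
    rw [gradient_neg' f hdiff, inner_neg_left] at h
    linarith
  · have h := descent_upper f L hdiff hlip x y
    linarith





lemma regret_arith (L α β A B A' B' Cs Cs' M : ℝ)
    (hα : α ≤ 0) (hαβ : 0 < α + β)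
    (f2 : Cs ≤ B + L * M) (f3 : A ≤ B + L * M)
    (f4 : Cs' ≤ A') (f5 : B' ≤ Cs')
    (f6 : α * A + β * B ≤ α * A' + β * B') :
    Cs - Cs' ≤ L * (1 + |α| / (α + β)) * M := by
  have hβ : (0:ℝ) ≤ β := by linarith
  have key : (Cs - Cs') * (α + β) ≤ L * M * β := by
    nlinarith [mul_le_mul_of_nonneg_left f2 hαβ.le, mul_le_mul_of_nonpos_left f3 hα,
      mul_le_mul_of_nonpos_left f4 hα, mul_le_mul_of_nonneg_left f5 hβ, f6]
  rw [abs_of_nonpos hα]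
  have heq : L * (1 + -α / (α + β)) * M = (L * M * β) / (α + β) := by
    field_simp
    ring
  rw [heq, le_div_iff₀ hαβ]
  linarith [key]


end Aux


/-- The context-control space `ℝ^{nZ} × ℝ^{nU}` with the Euclidean (L²) norm,
identified with `ℝ^{nZ+nU}`. -/
abbrev CtrlSpace (nZ nU : ℕ) :=
  WithLp 2 (EuclideanSpace ℝ (Fin nZ) × EuclideanSpace ℝ (Fin nU))

/-- Identification of a pair `(z, u)` with a point of `ℝ^{nZ+nU}`. -/
noncomputable def pairCtrl {nZ nU : ℕ} (z : EuclideanSpace ℝ (Fin nZ)) (u : EuclideanSpace ℝ (Fin nU)) :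
    CtrlSpace nZ nU :=
  (WithLp.equiv 2 _).symm (z, u)

/-- Linear approximant `ℓ(s; C, q) = C(q) + ∇C(q)·(s − q)`. -/
noncomputable def lapprox {nZ nU : ℕ} (C : CtrlSpace nZ nU → ℝ)
    (q s : CtrlSpace nZ nU) : ℝ :=
  C q + inner ℝ (gradient C q) (s - q)

/-- Data-driven majorant `C_{t−1}^+(s)` built from data points `q_0, …, q_{t−1}`. -/
noncomputable def ddMajorant {nZ nU t : ℕ} (ht : 0 < t) (C : CtrlSpace nZ nU → ℝ)
    (L : ℝ) (q : Fin t → CtrlSpace nZ nU) (s : CtrlSpace nZ nU) : ℝ :=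
  Finset.univ.inf' (Finset.univ_nonempty_iff.mpr (Fin.pos_iff_nonempty.mp ht))
    fun i => lapprox C (q i) s + L / 2 * ‖s - q i‖ ^ 2

/-- Data-driven minorant `C_{t−1}^-(s)` built from data points `q_0, …, q_{t−1}`. -/
noncomputable def ddMinorant {nZ nU t : ℕ} (ht : 0 < t) (C : CtrlSpace nZ nU → ℝ)
    (L : ℝ) (q : Fin t → CtrlSpace nZ nU) (s : CtrlSpace nZ nU) : ℝ :=
  Finset.univ.sup' (Finset.univ_nonempty_iff.mpr (Fin.pos_iff_nonempty.mp ht))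
    fun i => lapprox C (q i) s - L / 2 * ‖s - q i‖ ^ 2

/-- Surrogate `m_{t,α,β}(s) = α·C_{t−1}^+(s) + β·C_{t−1}^-(s)`. -/
noncomputable def surrogate {nZ nU t : ℕ} (ht : 0 < t) (C : CtrlSpace nZ nU → ℝ)
    (L α β : ℝ) (q : Fin t → CtrlSpace nZ nU) (s : CtrlSpace nZ nU) : ℝ :=
  α * ddMajorant ht C L q s + β * ddMinorant ht C L q s

/-- Regret upper bound: if `u` minimizes the surrogate `m_{t,α,β}(z, ·)` over `U`
(with `α ≤ 0 < α + β`) and `u*` minimizes `C(z, ·)` over `U`, then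
`C(z,u) − C(z,u*) ≤ L·(1 + |α|/(α+β))·min_{0≤i≤t−1} ‖(z,u) − q_i‖²`. -/
theorem surrogate_minimizer_regret_bound {nZ nU t : ℕ} (ht : 0 < t)
    (Z : Set (EuclideanSpace ℝ (Fin nZ))) (U : Set (EuclideanSpace ℝ (Fin nU)))
    (hZ : Z.Nonempty) (hU : U.Nonempty)
    (C : CtrlSpace nZ nU → ℝ) (L : ℝ) (hL : 0 < L)
    (hdiff : Differentiable ℝ C)
    (hlip : ∀ x y, ‖gradient C y - gradient C x‖ ≤ L * ‖y - x‖)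
    (q : Fin t → CtrlSpace nZ nU) (α β : ℝ) (hα : α ≤ 0) (hαβ : 0 < α + β)
    (z : EuclideanSpace ℝ (Fin nZ)) (hz : z ∈ Z)
    (u : EuclideanSpace ℝ (Fin nU)) (hu : u ∈ U)
    (hmin : ∀ u' ∈ U, surrogate ht C L α β q (pairCtrl z u) ≤ surrogate ht C L α β q (pairCtrl z u'))
    (ustar : EuclideanSpace ℝ (Fin nU)) (hustar : ustar ∈ U)
    (hoptim : ∀ u' ∈ U, C (pairCtrl z ustar) ≤ C (pairCtrl z u')) :
    C (pairCtrl z u) - C (pairCtrl z ustar)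
      ≤ L * (1 + |α| / (α + β)) *
        Finset.univ.inf' (Finset.univ_nonempty_iff.mpr (Fin.pos_iff_nonempty.mp ht))
          (fun i => ‖pairCtrl z u - q i‖ ^ 2) := by
  classical
  have hne : (Finset.univ : Finset (Fin t)).Nonempty :=
    Finset.univ_nonempty_iff.mpr (Fin.pos_iff_nonempty.mp ht)
  have hkey : ∀ (p w : CtrlSpace nZ nU),
      |C w - lapprox C p w| ≤ L / 2 * ‖w - p‖ ^ 2 := by
    intro p w
    simpa [lapprox, add_assoc] using descent_abs C L hdiff hlip p w
  have f4 : C (pairCtrl z ustar) ≤ ddMajorant ht C L q (pairCtrl z ustar) := by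
    apply Finset.le_inf'
    intro i _
    have := (abs_le.mp (hkey (q i) (pairCtrl z ustar))).2
    linarith
  have f5 : ddMinorant ht C L q (pairCtrl z ustar) ≤ C (pairCtrl z ustar) := by
    apply Finset.sup'_le
    intro i _
    have := (abs_le.mp (hkey (q i) (pairCtrl z ustar))).1
    linarith
  obtain ⟨i₀, -, hi₀⟩ :=
    Finset.exists_mem_eq_inf' hne (fun i => ‖pairCtrl z u - q i‖ ^ 2)
  have hBlow : lapprox C (q i₀) (pairCtrl z u) - L / 2 * ‖pairCtrl z u - q i₀‖ ^ 2
      ≤ ddMinorant ht C L q (pairCtrl z u) :=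
    Finset.le_sup' (fun i => lapprox C (q i) (pairCtrl z u) - L / 2 * ‖pairCtrl z u - q i‖ ^ 2)
      (Finset.mem_univ i₀)
  have hAup : ddMajorant ht C L q (pairCtrl z u)
      ≤ lapprox C (q i₀) (pairCtrl z u) + L / 2 * ‖pairCtrl z u - q i₀‖ ^ 2 :=
    Finset.inf'_le (fun i => lapprox C (q i) (pairCtrl z u) + L / 2 * ‖pairCtrl z u - q i‖ ^ 2)
      (Finset.mem_univ i₀)
  have f3 : ddMajorant ht C L q (pairCtrl z u) ≤ ddMinorant ht C L q (pairCtrl z u)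
      + L * Finset.univ.inf' hne (fun i => ‖pairCtrl z u - q i‖ ^ 2) := by
    rw [hi₀]
    linarith
  have f2 : C (pairCtrl z u) ≤ ddMinorant ht C L q (pairCtrl z u)
      + L * Finset.univ.inf' hne (fun i => ‖pairCtrl z u - q i‖ ^ 2) := by
    rw [hi₀]
    have h9 := (abs_le.mp (hkey (q i₀) (pairCtrl z u))).2
    linarith
  have f6 := hmin ustar hustar
  rw [surrogate, surrogate] at f6
  exact regret_arith L α β (ddMajorant ht C L q (pairCtrl z u))
    (ddMinorant ht C L q (pairCtrl z u)) (ddMajorant ht C L q (pairCtrl z ustar))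
    (ddMinorant ht C L q (pairCtrl z ustar)) (C (pairCtrl z u)) (C (pairCtrl z ustar))
    (Finset.univ.inf' hne (fun i => ‖pairCtrl z u - q i‖ ^ 2)) hα hαβ f2 f3 f4 f5 f6
end

section
/- For every integer d ≥ 1 there exists a constant κ > 0, depending only on d, such that for every L > 0 and every nonempty finite set S ⊂ ℝ^d there exists a continuously differentiable function C : ℝ^d → ℝ with the following properties: (1) C(s) ≤ 0 for all s ∈ ℝ^d; (2) the gradient ∇C is L-Lipschitz on ℝ^d; (3) C(q) = 0 and ∇C(q) = 0 for every q ∈ S; (4) C(s) ≤ −κ·L·dist(s, S)² for all s ∈ ℝ^d; and (5) ‖∇C(s)‖ ≤ L·dist(s, S) for all s ∈ ℝ^d. -/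
open Metric InnerProductSpace

section Aux

variable {E : Type*} [NormedAddCommGroup E] [InnerProductSpace ℝ E] [ProperSpace E]
  [CompleteSpace E]

/-- Midpoint norm-square identity (parallelogram law). -/
private lemma mid_norm_sq (a b c : E) :
    ‖(2:ℝ)⁻¹ • (a + b) - c‖ ^ 2 = ‖a - c‖ ^ 2 / 2 + ‖b - c‖ ^ 2 / 2 - ‖a - b‖ ^ 2 / 4 := by
  have h := parallelogram_law_with_norm ℝ (a - c) (b - c)
  have h1 : (2:ℝ)⁻¹ • (a + b) - c = (2:ℝ)⁻¹ • ((a - c) + (b - c)) := by module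
  have h3 : (a - c) - (b - c) = a - b := by abel
  rw [h3] at h
  rw [h1, norm_smul]
  simp only [Real.norm_eq_abs, abs_of_pos (show (0:ℝ) < 2⁻¹ by norm_num)]
  nlinarith [h]

private lemma four_norm_identity (s t ys yt : E) :
    (‖t - ys‖^2 - ‖s - ys‖^2) + (‖s - yt‖^2 - ‖t - yt‖^2)
      = 2 * (inner ℝ (s - t) (ys - yt) : ℝ) := by
  simp only [norm_sub_sq_real, inner_sub_left, inner_sub_right, real_inner_comm s t,
    real_inner_comm s ys, real_inner_comm s yt, real_inner_comm t ys, real_inner_comm t yt,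
    real_inner_comm ys yt]
  ring

private lemma expand_shift (x y z : E) :
    ‖x - y‖ ^ 2 = ‖x - z‖ ^ 2 - 2 * (inner ℝ (x - z) (y - z) : ℝ) + ‖y - z‖ ^ 2 := by
  have : x - y = (x - z) - (y - z) := by abel
  rw [this, norm_sub_sq_real]

/-- The penalized objective to be maximized. -/
private noncomputable def psiK (K : Set E) (s y : E) : ℝ :=
  infDist y K ^ 2 / 2 - ‖s - y‖ ^ 2

private lemma psiK_self (K : Set E) (s : E) : psiK K s s = infDist s K ^ 2 / 2 := by
  simp [psiK]

private lemma psiK_cont (K : Set E) (s : E) : Continuous (psiK K s) := by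
  unfold psiK
  exact (((continuous_infDist_pt K).pow 2).div_const 2).sub
    ((continuous_const.sub continuous_id).norm.pow 2)

/-- Existence of a global maximizer of `psiK K s`. -/
private lemma psiK_exists_max (K : Set E) (hK : IsCompact K) (hne : K.Nonempty) (s : E) :
    ∃ z : E, ∀ y : E, psiK K s y ≤ psiK K s z := by
  set a := infDist s K with ha
  have ha0 : 0 ≤ a := infDist_nonneg
  have hsmem : s ∈ closedBall s (2*a+1) := by
    simp [mem_closedBall]; positivity
  obtain ⟨z, hzmem, hzmax⟩ := (isCompact_closedBall s (2*a+1)).exists_isMaxOn ⟨s, hsmem⟩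
    ((psiK_cont K s).continuousOn)
  refine ⟨z, fun y => ?_⟩
  by_cases hy : y ∈ closedBall s (2*a+1)
  · exact hzmax hy
  · have hr : 2*a+1 < dist y s := by
      simpa [mem_closedBall] using hy
    set r := dist y s with hrdef
    have hr0 : 0 ≤ r := dist_nonneg
    have hDy : infDist y K ≤ a + r := by
      have := infDist_le_infDist_add_dist (x := y) (y := s) (s := K)
      linarith [this]
    have hDy0 : 0 ≤ infDist y K := infDist_nonneg
    have hDy2 : infDist y K ^ 2 ≤ (a + r) ^ 2 := by nlinarith
    have hnorm : ‖s - y‖ = r := by rw [hrdef, dist_comm, dist_eq_norm]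
    have h1 : psiK K s y ≤ (a + r)^2/2 - r^2 := by
      unfold psiK; rw [hnorm]; linarith
    have h2 : psiK K s s ≤ psiK K s z := hzmax hsmem
    rw [psiK_self] at h2
    have : (a + r)^2/2 - r^2 < a^2/2 := by nlinarith
    linarith [h1, this, h2]

/-- Strong optimality: a maximizer beats every point by a quadratic margin. -/
private lemma psiK_strong_max {K : Set E} (hK : IsCompact K) (hne : K.Nonempty)
    {s z : E} (hmax : ∀ y : E, psiK K s y ≤ psiK K s z) (y : E) :
    psiK K s y + ‖y - z‖ ^ 2 / 4 ≤ psiK K s z := by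
  set m := (2:ℝ)⁻¹ • (z + y) with hm
  obtain ⟨q, hqK, hqd⟩ := hK.exists_infDist_eq_dist hne m
  have h1 : infDist m K ^ 2 = ‖m - q‖ ^ 2 := by rw [hqd, dist_eq_norm]
  have h2 : infDist z K ^ 2 ≤ ‖z - q‖ ^ 2 := by
    have := infDist_le_dist_of_mem (x := z) hqK
    rw [dist_eq_norm] at this
    nlinarith [infDist_nonneg (x := z) (s := K)]
  have h3 : infDist y K ^ 2 ≤ ‖y - q‖ ^ 2 := by
    have := infDist_le_dist_of_mem (x := y) hqK
    rw [dist_eq_norm] at this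
    nlinarith [infDist_nonneg (x := y) (s := K)]
  have hmq : ‖m - q‖ ^ 2 = ‖z - q‖^2/2 + ‖y - q‖^2/2 - ‖z - y‖^2/4 := mid_norm_sq z y q
  have hms : ‖m - s‖ ^ 2 = ‖z - s‖^2/2 + ‖y - s‖^2/2 - ‖z - y‖^2/4 := mid_norm_sq z y s
  have hsm : ‖s - m‖ = ‖m - s‖ := norm_sub_rev s m
  have hsz : ‖s - z‖ = ‖z - s‖ := norm_sub_rev s z
  have hsy : ‖s - y‖ = ‖y - s‖ := norm_sub_rev s y
  have hyz : ‖y - z‖ = ‖z - y‖ := norm_sub_rev y z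
  have hmle := hmax m
  unfold psiK at hmle ⊢
  rw [hsm, hsz, hsy, hyz] at *
  nlinarith [hmle, h1, h2, h3, hmq, hms]

set_option maxHeartbeats 2000000 in
/-- The main auxiliary construction. -/
theorem aux_resisting (K : Set E) (hK : IsCompact K) (hne : K.Nonempty)
    (L : ℝ) (hL : 0 < L) :
    ∃ C : E → ℝ,
      ContDiff ℝ 1 C ∧
      (∀ s, C s ≤ 0) ∧
      (∀ x y, ‖gradient C y - gradient C x‖ ≤ L * ‖y - x‖) ∧
      (∀ q ∈ K, C q = 0 ∧ gradient C q = 0) ∧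
      (∀ s, C s ≤ -(1/20) * L * infDist s K ^ 2) ∧
      (∀ s, ‖gradient C s‖ ≤ L * infDist s K) := by
  choose Y hY using psiK_exists_max K hK hne
  have hstrong : ∀ s y, psiK K s y + ‖y - Y s‖ ^ 2 / 4 ≤ psiK K s (Y s) :=
    fun s y => psiK_strong_max hK hne (hY s) y
  set g : E → ℝ := fun s => psiK K s (Y s) with hgdef
  -- lower bound on g
  have hg_lb : ∀ s, infDist s K ^ 2 / 2 ≤ g s := by
    intro s
    have := hY s s
    rwa [psiK_self] at this
  have hg_nonneg : ∀ s, 0 ≤ g s := fun s => le_trans (by positivity) (hg_lb s)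
  -- Y is 4-Lipschitz
  have hYlip : ∀ s t, ‖Y s - Y t‖ ≤ 4 * ‖s - t‖ := by
    intro s t
    have h1 := hstrong s (Y t)
    have h2 := hstrong t (Y s)
    have hids : psiK K s (Y t) = infDist (Y t) K ^2/2 - ‖s - Y t‖^2 := rfl
    have key : ‖Y s - Y t‖ ^ 2 / 2 ≤ 2 * (inner ℝ (s - t) (Y s - Y t) : ℝ) := by
      have hiden := four_norm_identity s t (Y s) (Y t)
      have e1 : ‖Y t - Y s‖ = ‖Y s - Y t‖ := norm_sub_rev _ _
      unfold psiK at h1 h2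
      rw [e1] at h1
      nlinarith [h1, h2, hiden]
    have hcs : (inner ℝ (s - t) (Y s - Y t) : ℝ) ≤ ‖s - t‖ * ‖Y s - Y t‖ :=
      real_inner_le_norm _ _
    rcases eq_or_lt_of_le (norm_nonneg (Y s - Y t)) with h0 | h0
    · rw [← h0]; positivity
    · nlinarith [key, hcs, h0]
  -- subgradient inequality
  have hsub : ∀ s s', g s + (‖s - Y s‖^2 - ‖s' - Y s‖^2) ≤ g s' := by
    intro s s'
    have h := hY s' (Y s)
    have e1 : psiK K s' (Y s) = infDist (Y s) K ^2/2 - ‖s' - Y s‖^2 := rfl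
    have e2 : g s = infDist (Y s) K ^2/2 - ‖s - Y s‖^2 := rfl
    have e3 : g s' = psiK K s' (Y s') := rfl
    linarith [h]
  -- the gradient of g
  set v : E → E := fun s => (2:ℝ) • (Y s - s) with hvdef
  have hverr : ∀ s s', |g s' - g s - (inner ℝ (v s) (s' - s) : ℝ)| ≤ 11 * ‖s' - s‖^2 := by
    intro s s'
    have hv_inner : (inner ℝ (v s) (s' - s) : ℝ) = 2 * (inner ℝ (s' - s) (Y s - s) : ℝ) := by
      rw [hvdef]
      simp only [real_inner_smul_left]
      rw [real_inner_comm]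
    have e1 : ‖s' - Y s‖ ^ 2
        = ‖s' - s‖^2 - 2 * (inner ℝ (s' - s) (Y s - s) : ℝ) + ‖Y s - s‖^2 :=
      expand_shift s' (Y s) s
    have e2 : ‖s - Y s'‖ ^ 2
        = ‖s - s'‖^2 - 2 * (inner ℝ (s - s') (Y s' - s') : ℝ) + ‖Y s' - s'‖^2 :=
      expand_shift s (Y s') s'
    have hlow := hsub s s'
    have hup := hsub s' s
    have hn1 : ‖s - Y s‖ = ‖Y s - s‖ := norm_sub_rev _ _
    have hn2 : ‖s' - Y s'‖ = ‖Y s' - s'‖ := norm_sub_rev _ _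
    have hn3 : ‖s - s'‖ = ‖s' - s‖ := norm_sub_rev _ _
    -- lower bound
    have hlow' : -(‖s' - s‖^2) ≤ g s' - g s - (inner ℝ (v s) (s' - s) : ℝ) := by
      rw [hv_inner]
      rw [hn1] at hlow
      rw [e1] at hlow
      linarith
    -- upper bound
    have hinup : (inner ℝ (s - s') (Y s' - s') : ℝ)
        = -(inner ℝ (s' - s) (Y s' - s') : ℝ) := by
      rw [show s - s' = -(s' - s) by abel, inner_neg_left]
    have hup' : g s' - g s ≤ ‖s' - s‖^2 + 2 * (inner ℝ (s' - s) (Y s' - s') : ℝ) := by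
      rw [hn2] at hup
      rw [e2, hinup, hn3] at hup
      linarith
    have hdiff : (inner ℝ (s' - s) (Y s' - s') : ℝ) - (inner ℝ (s' - s) (Y s - s) : ℝ)
        = (inner ℝ (s' - s) ((Y s' - Y s) - (s' - s)) : ℝ) := by
      rw [← inner_sub_right]
      congr 1
      abel
    have hcs : (inner ℝ (s' - s) ((Y s' - Y s) - (s' - s)) : ℝ)
        ≤ ‖s' - s‖ * ‖(Y s' - Y s) - (s' - s)‖ := real_inner_le_norm _ _
    have hbig : ‖(Y s' - Y s) - (s' - s)‖ ≤ 5 * ‖s' - s‖ := by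
      have := hYlip s' s
      calc ‖(Y s' - Y s) - (s' - s)‖ ≤ ‖Y s' - Y s‖ + ‖s' - s‖ := norm_sub_le _ _
        _ ≤ 4 * ‖s' - s‖ + ‖s' - s‖ := by linarith
        _ = 5 * ‖s' - s‖ := by ring
    have hup'' : g s' - g s - (inner ℝ (v s) (s' - s) : ℝ) ≤ 11 * ‖s' - s‖^2 := by
      rw [hv_inner]
      have h5 : (inner ℝ (s' - s) (Y s' - s') : ℝ) - (inner ℝ (s' - s) (Y s - s) : ℝ)
          ≤ 5 * ‖s' - s‖^2 := by
        rw [hdiff]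
        calc (inner ℝ (s' - s) ((Y s' - Y s) - (s' - s)) : ℝ)
            ≤ ‖s' - s‖ * ‖(Y s' - Y s) - (s' - s)‖ := hcs
          _ ≤ ‖s' - s‖ * (5 * ‖s' - s‖) := by
              exact mul_le_mul_of_nonneg_left hbig (norm_nonneg _)
          _ = 5 * ‖s' - s‖^2 := by ring
      linarith
    rw [abs_le]
    constructor
    · nlinarith [hlow', sq_nonneg ‖s' - s‖]
    · exact hup''
  have hgrad_g : ∀ s, HasGradientAt g (v s) s := by
    intro s
    rw [hasGradientAt_iff_isLittleO, Asymptotics.isLittleO_iff]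
    intro c hc
    have hball : Metric.ball s (c / 11) ∈ nhds s := Metric.ball_mem_nhds s (by positivity)
    filter_upwards [hball] with y hy
    have hd : ‖y - s‖ < c / 11 := by rwa [Metric.mem_ball, dist_eq_norm] at hy
    have := hverr s y
    rw [Real.norm_eq_abs]
    calc |g y - g s - (inner ℝ (v s) (y - s) : ℝ)| ≤ 11 * ‖y - s‖^2 := this
      _ = 11 * ‖y - s‖ * ‖y - s‖ := by ring
      _ ≤ c * ‖y - s‖ := by nlinarith [norm_nonneg (y - s)]
      _ = c * ‖(fun x' => x' - s) y‖ := by simp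
  -- the final function
  set c0 : ℝ := -(L/10) with hc0
  set C : E → ℝ := fun s => c0 * g s with hC
  set w : E → E := fun s => c0 • v s with hw
  have hgradC : ∀ s, HasGradientAt C (w s) s := by
    intro s
    have h1 : HasFDerivAt g (toDual ℝ E (v s)) s := (hgrad_g s).hasFDerivAt
    have h2 : HasFDerivAt C (c0 • toDual ℝ E (v s)) s := h1.const_mul c0
    have h3 : (c0 • toDual ℝ E (v s)) = toDual ℝ E (c0 • v s) := by
      simp [map_smul]
    rw [h3] at h2
    simpa using h2.hasGradientAt
  have hgradC_eq : ∀ s, gradient C s = w s := fun s => (hgradC s).gradient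
  -- continuity of Y, v, w
  have hYcont : Continuous Y := by
    apply LipschitzWith.continuous (K := 4)
    apply LipschitzWith.of_dist_le_mul
    intro x y
    rw [dist_eq_norm, dist_eq_norm]
    simpa using hYlip x y
  have hwcont : Continuous w := by
    apply Continuous.const_smul
    exact ((hYcont.sub continuous_id).const_smul (2:ℝ))
  -- C¹
  have hdiff : Differentiable ℝ C := fun s => ((hgradC s).hasFDerivAt).differentiableAt
  have hC1 : ContDiff ℝ 1 C := by
    rw [contDiff_one_iff_fderiv]
    refine ⟨hdiff, ?_⟩
    have : (fderiv ℝ C) = fun s => toDual ℝ E (w s) :=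
      funext fun s => ((hgradC s).hasFDerivAt).fderiv
    rw [this]
    exact (toDual ℝ E).continuous.comp hwcont
  -- norm of w
  have hwnorm : ∀ s, ‖w s‖ = (L/10) * (2 * ‖Y s - s‖) := by
    intro s
    rw [hw, hvdef]
    simp only [norm_smul, Real.norm_eq_abs]
    rw [abs_of_nonpos (show c0 ≤ 0 by rw [hc0]; linarith),
      abs_of_nonneg (by norm_num : (0:ℝ) ≤ 2)]
    rw [hc0]
    ring
  -- key displacement bound : ‖Y s - s‖ ≤ 2 * infDist s K
  have hdisp : ∀ s, ‖Y s - s‖ ≤ 2 * infDist s K := by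
    intro s
    set D := infDist s K with hD
    set r := ‖Y s - s‖ with hr
    have hr0 : 0 ≤ r := norm_nonneg _
    have hD0 : 0 ≤ D := infDist_nonneg
    have h1 : infDist (Y s) K ≤ D + r := by
      have := infDist_le_infDist_add_dist (x := Y s) (y := s) (s := K)
      rw [dist_eq_norm] at this
      linarith
    have h2 : infDist (Y s) K ^ 2 ≤ (D + r)^2 := by
      nlinarith [infDist_nonneg (x := Y s) (s := K)]
    have h3 : D^2/2 ≤ g s := hg_lb s
    have h4 : g s = infDist (Y s) K ^2/2 - ‖s - Y s‖^2 := rfl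
    have h5 : ‖s - Y s‖ = r := by rw [hr, norm_sub_rev]
    rw [h4, h5] at h3
    nlinarith [h3, h2]
  -- pointwise descriptions, then forget the definitions
  have hCg : ∀ s, C s = c0 * g s := fun _ => rfl
  have hgpsi : ∀ s, g s = psiK K s (Y s) := fun _ => rfl
  have hwv : ∀ s, w s = c0 • ((2:ℝ) • (Y s - s)) := fun _ => rfl
  clear_value C w v g c0
  refine ⟨C, hC1, ?_, ?_, ?_, ?_, ?_⟩
  · -- nonpositive
    intro s
    rw [hCg s, hc0]
    nlinarith [hg_nonneg s]
  · -- Lipschitz gradient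
    intro x y
    rw [hgradC_eq y, hgradC_eq x, hwv y, hwv x]
    have key : c0 • ((2:ℝ) • (Y y - y)) - c0 • ((2:ℝ) • (Y x - x))
        = c0 • ((2:ℝ) • ((Y y - Y x) - (y - x))) := by
      rw [← smul_sub, ← smul_sub]
      congr 2
      abel
    rw [key, norm_smul, norm_smul]
    simp only [Real.norm_eq_abs]
    have h1 : |c0| = L/10 := by
      rw [hc0, abs_of_nonpos (by linarith)]; ring
    have h2 : |(2:ℝ)| = 2 := by norm_num
    rw [h1, h2]
    have h3 : ‖(Y y - Y x) - (y - x)‖ ≤ 5 * ‖y - x‖ := by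
      have := hYlip y x
      calc ‖(Y y - Y x) - (y - x)‖ ≤ ‖Y y - Y x‖ + ‖y - x‖ := norm_sub_le _ _
        _ ≤ 4 * ‖y - x‖ + ‖y - x‖ := by linarith
        _ = 5 * ‖y - x‖ := by ring
    nlinarith [h3, norm_nonneg ((Y y - Y x) - (y - x))]
  · -- vanishing on K
    intro q hq
    have hDq : infDist q K = 0 := infDist_zero_of_mem hq
    have hpsile : ∀ y, psiK K q y ≤ 0 := by
      intro y
      have h1 : infDist y K ≤ ‖q - y‖ := by
        have := infDist_le_dist_of_mem (x := y) hq
        rw [dist_eq_norm, norm_sub_rev] at this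
        exact this
      have h2 : infDist y K ^ 2 ≤ ‖q - y‖^2 := by
        nlinarith [infDist_nonneg (x := y) (s := K)]
      unfold psiK
      nlinarith [sq_nonneg ‖q - y‖]
    have hgq : g q = 0 := by
      have h1 : g q ≤ 0 := le_of_le_of_eq (le_of_eq (hgpsi q)) (by rfl) |>.trans (hpsile (Y q))
      have h2 : 0 ≤ g q := hg_nonneg q
      linarith
    have hYq : Y q = q := by
      have h1 := hstrong q q
      rw [psiK_self, hDq] at h1
      rw [← hgpsi q, hgq] at h1
      have hsq : ‖q - Y q‖^2 ≤ 0 := by nlinarith [h1]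
      have hz : ‖q - Y q‖ = 0 := by nlinarith [norm_nonneg (q - Y q), sq_nonneg ‖q - Y q‖]
      have := sub_eq_zero.mp (norm_eq_zero.mp hz)
      exact this.symm
    constructor
    · rw [hCg q, hgq]; ring
    · rw [hgradC_eq q, hwv q, hYq]
      simp
  · -- quadratic decrease
    intro s
    rw [hCg s, hc0]
    have h1 := mul_le_mul_of_nonneg_left (hg_lb s) (le_of_lt hL)
    linarith [h1]
  · -- gradient norm bound
    intro s
    rw [hgradC_eq s, hwnorm s]
    have h1 := mul_le_mul_of_nonneg_left (hdisp s)
      (show (0:ℝ) ≤ L/10 by positivity)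
    have hD0 : 0 ≤ infDist s K := infDist_nonneg
    nlinarith [h1]

end Aux

/-- Whitney-type construction: for every dimension `d ≥ 1` there is a constant `κ > 0`
depending only on `d` such that for every `L > 0` and every nonempty finite set
`S ⊂ ℝ^d` there is a `C¹` function `C : ℝ^d → ℝ`, nonpositive, with `L`-Lipschitz
gradient, vanishing to first order on `S`, with `C(s) ≤ −κ·L·dist(s,S)²` and
`‖∇C(s)‖ ≤ L·dist(s,S)` everywhere. -/
theorem exists_resisting_cost (d : ℕ) (hd : 1 ≤ d) :
    ∃ κ : ℝ, 0 < κ ∧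
      ∀ L : ℝ, 0 < L →
        ∀ S : Finset (EuclideanSpace ℝ (Fin d)), S.Nonempty →
          ∃ C : EuclideanSpace ℝ (Fin d) → ℝ,
            ContDiff ℝ 1 C ∧
            (∀ s, C s ≤ 0) ∧
            (∀ x y, ‖gradient C y - gradient C x‖ ≤ L * ‖y - x‖) ∧
            (∀ q ∈ S, C q = 0 ∧ gradient C q = 0) ∧
            (∀ s, C s ≤ -κ * L * Metric.infDist s (S : Set (EuclideanSpace ℝ (Fin d))) ^ 2) ∧
            (∀ s, ‖gradient C s‖ ≤ L * Metric.infDist s (S : Set (EuclideanSpace ℝ (Fin d)))) := by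
  refine ⟨1/20, by norm_num, ?_⟩
  intro L hL S hS
  obtain ⟨C, h1, h2, h3, h4, h5, h6⟩ :=
    aux_resisting (S : Set (EuclideanSpace ℝ (Fin d))) S.finite_toSet.isCompact
      (Finset.coe_nonempty.mpr hS) L hL
  refine ⟨C, h1, h2, h3, fun q hq => h4 q (Finset.mem_coe.mpr hq), fun s => ?_, h6⟩
  have := h5 s
  linarith [this]
end

section
/- Let nZ, nU ≥ 1 be integers and set d = nZ + nU. There exists a constant κ > 0, depending only on d, with the following property. Let L > 0, let U ⊂ ℝ^{nU} be a compact set of positive Lebesgue measure Vol(U), let ξ > 0 and δ > 0 satisfy V·⌈2√(nZ)·δ/ξ⌉^{nZ}·δ^{nU} < Vol(U), where V is the Lebesgue measure of the unit Euclidean ball in ℝ^{nU}, and let (z_0, u_0), …, (z_{T−1}, u_{T−1}) ∈ ℝ^{nZ} × U satisfy ‖z_t − z_{t'}‖ ≥ ξ whenever t ≠ t'. Then there exists a continuously differentiable function C : ℝ^d → ℝ with C ≤ 0 everywhere, with L-Lipschitz gradient, and with C(z_t, u_t) = 0 and ∇C(z_t, u_t) = 0 for every t, such that for every t ∈ {0,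 …, T−1} there exists v_t ∈ U with C(z_t, u_t) − C(z_t, v_t) ≥ κ·L·δ². -/
open MeasureTheory

namespace RegretLB

noncomputable section

open Filter Topology InnerProductSpace Metric
open scoped ENNReal

/-! ### A C¹ scalar kernel -/

def msq (t : ℝ) : ℝ := max t 0 ^ 2

lemma msq_nonneg (t : ℝ) : 0 ≤ msq t := sq_nonneg _

lemma msq_of_nonpos {t : ℝ} (h : t ≤ 0) : msq t = 0 := by
  simp [msq, max_eq_right h]

lemma msq_of_nonneg {t : ℝ} (h : 0 ≤ t) : msq t = t ^ 2 := by
  simp [msq, max_eq_left h]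

lemma hasDerivAt_msq (t : ℝ) : HasDerivAt msq (2 * max t 0) t := by
  rcases lt_trichotomy t 0 with ht | rfl | ht
  · have h0 : HasDerivAt (fun _ : ℝ => (0:ℝ)) 0 t := hasDerivAt_const _ _
    have he : msq =ᶠ[𝓝 t] fun _ => (0:ℝ) := by
      filter_upwards [Iio_mem_nhds ht] with s hs
      exact msq_of_nonpos (le_of_lt hs)
    have := h0.congr_of_eventuallyEq he
    simpa [max_eq_right ht.le] using this
  · rw [hasDerivAt_iff_tendsto_slope]
    have key : Tendsto (fun s : ℝ => max s 0) (𝓝[≠] (0:ℝ)) (𝓝 (0:ℝ)) := by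
      have : Tendsto (fun s : ℝ => max s 0) (𝓝 (0:ℝ)) (𝓝 (max 0 0)) :=
        (continuous_id.max continuous_const).tendsto 0
      simpa using this.mono_left nhdsWithin_le_nhds
    have heq : ∀ s ∈ ({(0:ℝ)}ᶜ : Set ℝ), max s 0 = slope msq 0 s := by
      intro s hs
      have hs0 : s ≠ 0 := hs
      rw [slope_def_field, msq_of_nonpos le_rfl]
      rcases le_or_gt s 0 with h | h
      · rw [msq_of_nonpos h, max_eq_right h]; simp
      · rw [msq_of_nonneg h.le, max_eq_left h.le]
        field_simp [sq]
        ring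
    have := key.congr' (eventually_nhdsWithin_of_forall heq)
    simpa using this
  · have h0 : HasDerivAt (fun s : ℝ => s ^ 2) (2 * t) t := by
      simpa using (hasDerivAt_pow 2 t)
    have he : msq =ᶠ[𝓝 t] fun s => s ^ 2 := by
      filter_upwards [Ioi_mem_nhds ht] with s hs
      exact msq_of_nonneg (le_of_lt hs)
    have := h0.congr_of_eventuallyEq he
    simpa [max_eq_left ht.le] using this

lemma deriv_msq : deriv msq = fun t => 2 * max t 0 :=
  funext fun t => (hasDerivAt_msq t).deriv

lemma contDiff_msq : ContDiff ℝ 1 msq := by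
  rw [contDiff_one_iff_deriv]
  refine ⟨fun t => (hasDerivAt_msq t).differentiableAt, ?_⟩
  rw [deriv_msq]
  exact continuous_const.mul (continuous_id.max continuous_const)

/-! ### Bump functions in a real inner product space -/

variable {F : Type*} [NormedAddCommGroup F] [InnerProductSpace ℝ F] [CompleteSpace F]

def bump (r : ℝ) (p x : F) : ℝ := msq (r ^ 2 - ‖x - p‖ ^ 2)

def bgrad (r : ℝ) (p x : F) : F := (-(4 * max (r ^ 2 - ‖x - p‖ ^ 2) 0)) • (x - p)

set_option linter.unusedSectionVars false

lemma contDiff_bump' (r : ℝ) (p : F) : ContDiff ℝ 1 (bump r p) := by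
  apply contDiff_msq.comp
  exact contDiff_const.sub ((contDiff_id.sub contDiff_const).norm_sq ℝ)

lemma hasGradientAt_bump (r : ℝ) (p x : F) : HasGradientAt (bump r p) (bgrad r p x) x := by
  have h1 : HasFDerivAt (fun y : F => y - p) (ContinuousLinearMap.id ℝ F) x :=
    (hasFDerivAt_id x).sub_const p
  have h2 : HasFDerivAt (fun y : F => ‖y - p‖ ^ 2)
      (2 • (innerSL ℝ (x - p)).comp (ContinuousLinearMap.id ℝ F)) x := h1.norm_sq
  have h3 : HasFDerivAt (fun y : F => r ^ 2 - ‖y - p‖ ^ 2)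
      (-(2 • (innerSL ℝ (x - p)).comp (ContinuousLinearMap.id ℝ F))) x := h2.const_sub _
  have h4 : HasFDerivAt (bump r p) _ x := (hasDerivAt_msq (r ^ 2 - ‖x - p‖ ^ 2)).comp_hasFDerivAt x h3
  rw [hasGradientAt_iff_hasFDerivAt]
  refine h4.congr_fderiv ?_
  ext w
  simp only [bgrad, toDual_apply_apply, ContinuousLinearMap.coe_smul', Pi.smul_apply,
    ContinuousLinearMap.coe_comp', Function.comp_apply, ContinuousLinearMap.coe_id', id_eq,
    ContinuousLinearMap.neg_apply, innerSL_apply_apply, smul_eq_mul]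
  rw [real_inner_smul_left, real_inner_comm]
  ring

lemma bump_nonneg (r : ℝ) (p x : F) : 0 ≤ bump r p x := msq_nonneg _

lemma bump_zero_of_far {r : ℝ} (hr : 0 ≤ r) {p x : F} (h : r ≤ ‖x - p‖) : bump r p x = 0 :=
  msq_of_nonpos (by nlinarith [norm_nonneg (x - p)])

lemma bump_self {r : ℝ} (hr : 0 ≤ r) (p : F) : bump r p p = r ^ 4 := by
  rw [bump, sub_self, norm_zero]
  rw [msq_of_nonneg (by nlinarith)]
  ring

lemma bgrad_zero_of_far {r : ℝ} (hr : 0 ≤ r) {p x : F} (h : r ≤ ‖x - p‖) :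
    bgrad r p x = 0 := by
  have : r ^ 2 - ‖x - p‖ ^ 2 ≤ 0 := by nlinarith [norm_nonneg (x - p)]
  simp [bgrad, max_eq_right this]

lemma bgrad_norm_le {r : ℝ} (hr : 0 ≤ r) {p x : F} (h : ‖x - p‖ ≤ r) :
    ‖bgrad r p x‖ ≤ 8 * r ^ 2 * (r - ‖x - p‖) := by
  set d := ‖x - p‖ with hd
  have hd0 : 0 ≤ d := norm_nonneg _
  have hmax : max (r ^ 2 - d ^ 2) 0 = r ^ 2 - d ^ 2 := max_eq_left (by nlinarith)
  have : ‖bgrad r p x‖ = 4 * (r ^ 2 - d ^ 2) * d := by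
    rw [bgrad, norm_smul, hmax]
    rw [Real.norm_eq_abs, abs_neg, abs_of_nonneg (by nlinarith)]
  rw [this]
  nlinarith [mul_nonneg (sq_nonneg (r - d)) (by linarith : (0:ℝ) ≤ 2 * r + d)]

lemma bgrad_lipschitz {r : ℝ} (hr : 0 ≤ r) (p : F) (x y : F) :
    ‖bgrad r p x - bgrad r p y‖ ≤ 12 * r ^ 2 * ‖x - y‖ := by
  have hxy : ‖x - y‖ = ‖(x - p) - (y - p)‖ := by rw [sub_sub_sub_cancel_right]
  have habs : |‖x - p‖ - ‖y - p‖| ≤ ‖x - y‖ := by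
    rw [hxy]; exact abs_norm_sub_norm_le _ _
  rcases le_or_gt ‖x - p‖ r with hx | hx
  · rcases le_or_gt ‖y - p‖ r with hy | hy
    · set dx := ‖x - p‖; set dy := ‖y - p‖
      have hmx : max (r ^ 2 - dx ^ 2) 0 = r ^ 2 - dx ^ 2 :=
        max_eq_left (by nlinarith [norm_nonneg (x-p)])
      have hmy : max (r ^ 2 - dy ^ 2) 0 = r ^ 2 - dy ^ 2 :=
        max_eq_left (by nlinarith [norm_nonneg (y-p)])
      have hsplit : bgrad r p x - bgrad r p y
          = (-(4 * (r ^ 2 - dx ^ 2))) • (x - y)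
            + (4 * (dx ^ 2 - dy ^ 2)) • (y - p) := by
        rw [bgrad, bgrad, hmx, hmy]
        module
      rw [hsplit]
      have h1 : ‖(-(4 * (r ^ 2 - dx ^ 2))) • (x - y)‖ ≤ 4 * r ^ 2 * ‖x - y‖ := by
        rw [norm_smul, Real.norm_eq_abs, abs_neg,
          abs_of_nonneg (by nlinarith [norm_nonneg (x-p)] : (0:ℝ) ≤ 4 * (r ^ 2 - dx ^ 2))]
        have : 4 * (r ^ 2 - dx ^ 2) ≤ 4 * r ^ 2 := by nlinarith [norm_nonneg (x-p)]
        exact mul_le_mul_of_nonneg_right this (norm_nonneg _)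
      have h2 : ‖(4 * (dx ^ 2 - dy ^ 2)) • (y - p)‖ ≤ 8 * r ^ 2 * ‖x - y‖ := by
        rw [norm_smul, Real.norm_eq_abs]
        have hdd : |dx ^ 2 - dy ^ 2| ≤ 2 * r * ‖x - y‖ := by
          have : dx ^ 2 - dy ^ 2 = (dx + dy) * (dx - dy) := by ring
          rw [this, abs_mul]
          have h1' : |dx + dy| ≤ 2 * r := by
            rw [abs_of_nonneg (by positivity)]
            linarith
          have h2' : |dx - dy| ≤ ‖x - y‖ := habs
          calc |dx + dy| * |dx - dy| ≤ (2 * r) * ‖x - y‖ :=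
                mul_le_mul h1' h2' (abs_nonneg _) (by positivity)
            _ = 2 * r * ‖x - y‖ := rfl
        have : |4 * (dx ^ 2 - dy ^ 2)| ≤ 8 * r * ‖x - y‖ := by
          rw [abs_mul, abs_of_nonneg (by norm_num : (0:ℝ) ≤ (4:ℝ))]
          linarith
        calc |4 * (dx ^ 2 - dy ^ 2)| * ‖y - p‖ ≤ (8 * r * ‖x - y‖) * r :=
              mul_le_mul this hy (norm_nonneg _) (by positivity)
          _ = 8 * r ^ 2 * ‖x - y‖ := by ring
      calc ‖_ + _‖ ≤ _ + _ := norm_add_le _ _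
        _ ≤ 4 * r ^ 2 * ‖x - y‖ + 8 * r ^ 2 * ‖x - y‖ := add_le_add h1 h2
        _ = 12 * r ^ 2 * ‖x - y‖ := by ring
    · rw [bgrad_zero_of_far hr hy.le, sub_zero]
      have h1 := bgrad_norm_le hr hx
      have h2 : r - ‖x - p‖ ≤ ‖x - y‖ := by
        have h3 : ‖y - p‖ - ‖x - p‖ ≤ |‖x - p‖ - ‖y - p‖| := by
          rw [abs_sub_comm]; exact le_abs_self _
        linarith
      calc ‖bgrad r p x‖ ≤ 8 * r ^ 2 * (r - ‖x - p‖) := h1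
        _ ≤ 8 * r ^ 2 * ‖x - y‖ := by nlinarith
        _ ≤ 12 * r ^ 2 * ‖x - y‖ := by nlinarith [norm_nonneg (x - y)]
  · rcases le_or_gt ‖y - p‖ r with hy | hy
    · rw [bgrad_zero_of_far hr hx.le, zero_sub, norm_neg]
      have h1 := bgrad_norm_le hr hy
      have h2 : r - ‖y - p‖ ≤ ‖x - y‖ := by
        have h3 : ‖x - p‖ - ‖y - p‖ ≤ |‖x - p‖ - ‖y - p‖| := le_abs_self _
        linarith
      calc ‖bgrad r p y‖ ≤ 8 * r ^ 2 * (r - ‖y - p‖) := h1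
        _ ≤ 8 * r ^ 2 * ‖x - y‖ := by nlinarith
        _ ≤ 12 * r ^ 2 * ‖x - y‖ := by nlinarith [norm_nonneg (x - y)]
    · rw [bgrad_zero_of_far hr hx.le, bgrad_zero_of_far hr hy.le, sub_zero, norm_zero]
      positivity

lemma sum_bgrad_lipschitz {ι : Type*} [Fintype ι] {r : ℝ} (hr : 0 ≤ r) {P : ι → F}
    (hsep : ∀ i j, i ≠ j → 2 * r ≤ ‖P i - P j‖) (x y : F) :
    ‖(∑ i, bgrad r (P i) x) - ∑ i, bgrad r (P i) y‖ ≤ 12 * r ^ 2 * ‖x - y‖ := by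
  classical
  have collapse : ∀ (w : F) (i : ι), ‖w - P i‖ < r →
      (∑ j, bgrad r (P j) w) = bgrad r (P i) w := by
    intro w i hi
    refine Finset.sum_eq_single_of_mem i (Finset.mem_univ i) ?_
    intro j _ hj
    refine bgrad_zero_of_far hr ?_
    by_contra hlt
    push_neg at hlt
    have := hsep i j (Ne.symm hj)
    have htri : ‖P i - P j‖ ≤ ‖w - P i‖ + ‖w - P j‖ := by
      have : P i - P j = -(w - P i) + (w - P j) := by abel
      rw [this]
      exact (norm_add_le _ _).trans (by rw [norm_neg])
    linarith
  have zeroall : ∀ (w : F), (∀ i : ι, r ≤ ‖w - P i‖) → (∑ j, bgrad r (P j) w) = 0 := by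
    intro w hw
    exact Finset.sum_eq_zero fun j _ => bgrad_zero_of_far hr (hw j)
  by_cases hx : ∃ i, ‖x - P i‖ < r
  · obtain ⟨i, hi⟩ := hx
    rw [collapse x i hi]
    by_cases hy : ∃ j, ‖y - P j‖ < r
    · obtain ⟨j, hj⟩ := hy
      rw [collapse y j hj]
      by_cases hij : i = j
      · subst hij; exact bgrad_lipschitz hr (P i) x y
      · have h1 := bgrad_norm_le hr hi.le
        have h2 := bgrad_norm_le hr hj.le
        have hsep' := hsep i j hij
        have htri : ‖P i - P j‖ ≤ ‖x - P i‖ + ‖x - y‖ + ‖y - P j‖ := by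
          have : P i - P j = -(x - P i) + (x - y) + (y - P j) := by abel
          rw [this]
          exact (norm_add_le _ _).trans (add_le_add
            ((norm_add_le _ _).trans (by rw [norm_neg])) le_rfl)
        calc ‖bgrad r (P i) x - bgrad r (P j) y‖
            ≤ ‖bgrad r (P i) x‖ + ‖bgrad r (P j) y‖ := norm_sub_le _ _
          _ ≤ 8 * r ^ 2 * (r - ‖x - P i‖) + 8 * r ^ 2 * (r - ‖y - P j‖) := add_le_add h1 h2
          _ = 8 * r ^ 2 * (2 * r - ‖x - P i‖ - ‖y - P j‖) := by ring
          _ ≤ 8 * r ^ 2 * ‖x - y‖ := by nlinarith [sq_nonneg r]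
          _ ≤ 12 * r ^ 2 * ‖x - y‖ := by nlinarith [norm_nonneg (x - y), sq_nonneg r]
    · push_neg at hy
      rw [zeroall y hy, sub_zero, ← sub_zero (bgrad r (P i) x),
        ← bgrad_zero_of_far hr (hy i)]
      exact bgrad_lipschitz hr (P i) x y
  · push_neg at hx
    rw [zeroall x hx, zero_sub, norm_neg]
    by_cases hy : ∃ j, ‖y - P j‖ < r
    · obtain ⟨j, hj⟩ := hy
      rw [collapse y j hj, ← sub_zero (bgrad r (P j) y), ← bgrad_zero_of_far hr (hx j),
        norm_sub_rev]
      exact bgrad_lipschitz hr (P j) x y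
    · push_neg at hy
      rw [zeroall y hy, norm_zero]
      positivity

/-! ### The cost function -/

section Cost
variable {ι : Type*} [Fintype ι]

def cost (c r : ℝ) (P : ι → F) (x : F) : ℝ := -(c * ∑ i, bump r (P i) x)

lemma contDiff_cost (c r : ℝ) (P : ι → F) : ContDiff ℝ 1 (cost c r P) := by
  have : ContDiff ℝ 1 (fun x => ∑ i, bump r (P i) x) :=
    ContDiff.sum fun i _ => contDiff_bump' r (P i)
  exact (contDiff_const.mul this).neg

lemma hasGradientAt_cost (c r : ℝ) (P : ι → F) (x : F) :
    HasGradientAt (cost c r P) ((-c) • ∑ i, bgrad r (P i) x) x := by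
  rw [hasGradientAt_iff_hasFDerivAt]
  have h1 : ∀ i ∈ (Finset.univ : Finset ι),
      HasFDerivAt (fun x => bump r (P i) x) (toDual ℝ F (bgrad r (P i) x)) x :=
    fun i _ => (hasGradientAt_bump r (P i) x).hasFDerivAt
  have h2 := HasFDerivAt.sum h1
  have h3 := h2.const_mul (-c)
  have h4 : HasFDerivAt (cost c r P) ((-c) • ∑ i, toDual ℝ F (bgrad r (P i) x)) x := by
    have e : cost c r P = fun y => -c * ∑ i, bump r (P i) y := by
      funext w; simp only [cost]; ring
    rw [e]; simpa only [Finset.sum_apply] using h3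
  have e2 : toDual ℝ F ((-c) • ∑ i, bgrad r (P i) x) = (-c) • ∑ i, toDual ℝ F (bgrad r (P i) x) := by
    rw [_root_.map_smul, _root_.map_sum]
  rw [e2]; exact h4

lemma gradient_cost (c r : ℝ) (P : ι → F) (x : F) :
    gradient (cost c r P) x = (-c) • ∑ i, bgrad r (P i) x :=
  (hasGradientAt_cost c r P x).gradient

end Cost

/-! ### Counting separated points -/

lemma euclid_coord_le {n : ℕ} (x : EuclideanSpace ℝ (Fin n)) (i : Fin n) :
    |x i| ≤ ‖x‖ := by
  rw [EuclideanSpace.norm_eq]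
  rw [← Real.sqrt_sq_eq_abs]
  apply Real.sqrt_le_sqrt
  calc x i ^ 2 = ‖x i‖ ^ 2 := by rw [Real.norm_eq_abs, sq_abs]
    _ ≤ ∑ j, ‖x j‖ ^ 2 :=
        Finset.single_le_sum (f := fun j => ‖x j‖ ^ 2) (fun j _ => by positivity)
          (Finset.mem_univ i)

lemma sep_card_le {n T : ℕ} (hn : 1 ≤ n) {ξ R : ℝ} (hξ : 0 < ξ) (hR : 0 < R)
    (z : Fin T → EuclideanSpace ℝ (Fin n))
    (hsep : ∀ t t', t ≠ t' → ξ ≤ ‖z t - z t'‖) (c : EuclideanSpace ℝ (Fin n)) :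
    (Finset.univ.filter fun t => ‖z t - c‖ < R).card ≤ ⌈2 * Real.sqrt n * R / ξ⌉₊ ^ n := by
  classical
  set M := ⌈2 * Real.sqrt n * R / ξ⌉₊ with hM
  have hsn : (0:ℝ) < Real.sqrt n := Real.sqrt_pos.2 (by exact_mod_cast hn)
  set h : ℝ := ξ / Real.sqrt n with hh
  have hh0 : 0 < h := div_pos hξ hsn
  set f : Fin T → (Fin n → ℕ) := fun t i => ⌊(z t i - c i + R) / h⌋₊ with hf
  have hbound : ∀ t ∈ (Finset.univ.filter fun t => ‖z t - c‖ < R), ∀ i, f t i < M := by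
    intro t ht i
    rw [Finset.mem_filter] at ht
    have hco : |z t i - c i| ≤ ‖z t - c‖ := by
      have := euclid_coord_le (z t - c) i
      simpa using this
    have h1 : z t i - c i < R := lt_of_le_of_lt (le_trans (le_abs_self _) hco) ht.2
    have h2 : -R < z t i - c i := by
      have h3 : -‖z t - c‖ ≤ -(|z t i - c i|) := neg_le_neg hco
      have h4 := neg_abs_le (z t i - c i)
      linarith
    have hy0 : 0 ≤ (z t i - c i + R) / h := div_nonneg (by linarith) hh0.le
    rw [Nat.floor_lt hy0]
    have hlt : (z t i - c i + R) / h < 2 * R / h := by gcongr; linarith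
    have heq : 2 * R / h = 2 * Real.sqrt n * R / ξ := by
      rw [hh]
      field_simp
    calc (z t i - c i + R) / h < 2 * R / h := hlt
      _ = 2 * Real.sqrt n * R / ξ := heq
      _ ≤ (M : ℝ) := Nat.le_ceil _
  have hinj : Set.InjOn f (Finset.univ.filter fun t => ‖z t - c‖ < R) := by
    intro t ht t' ht' hft
    by_contra hne
    have hsep' := hsep t t' hne
    have hcoord : ∀ i, |z t i - z t' i| < h := by
      intro i
      have e := congrFun hft i
      simp only [hf] at e
      set y := (z t i - c i + R) / h
      set y' := (z t' i - c i + R) / h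
      rw [Finset.mem_coe, Finset.mem_filter] at ht ht'
      have hyn : 0 ≤ y ∧ 0 ≤ y' := by
        constructor <;>
        · apply div_nonneg ?_ hh0.le
          have hco := euclid_coord_le (z t - c) i
          have hco' := euclid_coord_le (z t' - c) i
          simp only [PiLp.sub_apply] at hco hco'
          cases' (abs_le.1 hco) with hl _
          cases' (abs_le.1 hco') with hl' _
          first
          | linarith [ht.2, neg_abs_le (z t i - c i)]
          | linarith [ht'.2, neg_abs_le (z t' i - c i)]
      have h1 : |y - y'| < 1 := by
        have f1 := Nat.floor_le hyn.1
        have f2 := Nat.lt_floor_add_one y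
        have f3 := Nat.floor_le hyn.2
        have f4 := Nat.lt_floor_add_one y'
        rw [e] at f1 f2
        rw [abs_lt]
        constructor <;> linarith
      have h2 : y - y' = (z t i - z t' i) / h := by
        show ((z t i - c i + R) / h) - ((z t' i - c i + R) / h) = _
        ring
      rw [h2, abs_div, abs_of_pos hh0] at h1
      rw [div_lt_one hh0] at h1
      exact h1
    have hnorm : ‖z t - z t'‖ < ξ := by
      rw [EuclideanSpace.norm_eq]
      have hsum : ∑ i, ‖(z t - z t') i‖ ^ 2 < ξ ^ 2 := by
        have hterm : ∀ i : Fin n, ‖(z t - z t') i‖ ^ 2 < h ^ 2 := by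
          intro i
          have := hcoord i
          have h0 : ‖(z t - z t') i‖ = |z t i - z t' i| := by
            simp [Real.norm_eq_abs]
          rw [h0]
          nlinarith [abs_nonneg (z t i - z t' i)]
        calc ∑ i, ‖(z t - z t') i‖ ^ 2 < ∑ _i : Fin n, h ^ 2 := by
              apply Finset.sum_lt_sum_of_nonempty ?_ (fun i _ => hterm i)
              exact Finset.univ_nonempty_iff.2 (Fin.pos_iff_nonempty.1 hn)
          _ = n * h ^ 2 := by rw [Finset.sum_const, Finset.card_univ, Fintype.card_fin,
              nsmul_eq_mul]
          _ = ξ ^ 2 := by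
              rw [hh, div_pow, Real.sq_sqrt (by exact_mod_cast Nat.zero_le n : (0:ℝ) ≤ n)]
              field_simp
      calc Real.sqrt (∑ i, ‖(z t - z t') i‖ ^ 2) < Real.sqrt (ξ ^ 2) := by
            apply Real.sqrt_lt_sqrt ?_ hsum
            positivity
        _ = ξ := Real.sqrt_sq hξ.le
    linarith
  have hmaps : ∀ t ∈ (Finset.univ.filter fun t => ‖z t - c‖ < R),
      f t ∈ Fintype.piFinset (fun _ : Fin n => Finset.range M) := by
    intro t ht
    rw [Fintype.mem_piFinset]
    intro i
    rw [Finset.mem_range]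
    exact hbound t ht i
  calc (Finset.univ.filter fun t => ‖z t - c‖ < R).card
      ≤ (Fintype.piFinset (fun _ : Fin n => Finset.range M)).card :=
        Finset.card_le_card_of_injOn f hmaps hinj
    _ = M ^ n := by
        rw [Fintype.card_piFinset]
        simp

/-! ### Volume pigeonhole -/

lemma exists_far_point {n : ℕ} {U : Set (EuclideanSpace ℝ (Fin n))} {ρ : ℝ} (hρ : 0 < ρ)
    (A : Finset (EuclideanSpace ℝ (Fin n)))
    (hvol : (A.card : ℝ≥0∞) * (ENNReal.ofReal (ρ ^ n)
        * volume (ball (0 : EuclideanSpace ℝ (Fin n)) 1)) < volume U) :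
    ∃ v ∈ U, ∀ w ∈ A, ρ ≤ ‖v - w‖ := by
  classical
  set W : Set (EuclideanSpace ℝ (Fin n)) := ⋃ w ∈ A, ball w ρ with hW
  have hvolW : volume W ≤ (A.card : ℝ≥0∞) * (ENNReal.ofReal (ρ ^ n)
      * volume (ball (0 : EuclideanSpace ℝ (Fin n)) 1)) := by
    calc volume W ≤ ∑ w ∈ A, volume (ball w ρ) := measure_biUnion_finset_le A _
      _ = ∑ _w ∈ A, ENNReal.ofReal (ρ ^ n) * volume (ball (0 : EuclideanSpace ℝ (Fin n)) 1) := by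
          apply Finset.sum_congr rfl
          intro w _
          rw [Measure.addHaar_ball_of_pos volume w hρ, finrank_euclideanSpace_fin]
      _ = _ := by rw [Finset.sum_const, nsmul_eq_mul]
  have hne : ¬ U ⊆ W := by
    intro hsub
    exact absurd (le_trans (measure_mono hsub) hvolW) (not_le.2 hvol)
  rw [Set.not_subset] at hne
  obtain ⟨v, hvU, hvW⟩ := hne
  refine ⟨v, hvU, fun w hw => ?_⟩
  by_contra hlt
  push_neg at hlt
  apply hvW
  rw [hW, Set.mem_iUnion₂]
  exact ⟨w, hw, by rwa [mem_ball, dist_eq_norm]⟩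

/-! ### Greedy choice of controls -/

lemma exists_greedy_seq {α : Type*} [NormedAddCommGroup α] {U : Set α} {ρ : ℝ} {M T : ℕ}
    (close : Fin T → Fin T → Prop) [∀ s t, Decidable (close s t)]
    (hcard : ∀ t, (Finset.univ.filter fun s => close s t).card ≤ M)
    (u : Fin T → α)
    (Hav : ∀ A : Finset α, A.card ≤ 2 * M → ∃ v ∈ U, ∀ w ∈ A, ρ ≤ ‖v - w‖) :
    ∃ v : Fin T → α, ∀ t : Fin T, v t ∈ U ∧
      (∀ s, close s t → ρ ≤ ‖v t - u s‖) ∧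
      (∀ s : Fin T, (s : ℕ) < (t : ℕ) → close s t → ρ ≤ ‖v t - v s‖) := by
  classical
  obtain ⟨v₀, hv₀, -⟩ := Hav ∅ (by simp)
  have key : ∀ k : ℕ, ∃ v : Fin T → α, ∀ t : Fin T, (t : ℕ) < k → (v t ∈ U ∧
      (∀ s, close s t → ρ ≤ ‖v t - u s‖) ∧
      (∀ s : Fin T, (s : ℕ) < (t : ℕ) → close s t → ρ ≤ ‖v t - v s‖)) := by
    intro k
    induction k with
    | zero => exact ⟨fun _ => v₀, fun t ht => absurd ht (Nat.not_lt_zero _)⟩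
    | succ k ih =>
      obtain ⟨v, hv⟩ := ih
      by_cases hk : k < T
      · set tk : Fin T := ⟨k, hk⟩ with htk
        set A : Finset α :=
          ((Finset.univ.filter fun s => close s tk).image u) ∪
          ((Finset.univ.filter fun s => close s tk ∧ (s : ℕ) < k).image v) with hA
        have hcardA : A.card ≤ 2 * M := by
          calc A.card ≤ ((Finset.univ.filter fun s => close s tk).image u).card
              + ((Finset.univ.filter fun s => close s tk ∧ (s : ℕ) < k).image v).card :=
                Finset.card_union_le _ _
            _ ≤ (Finset.univ.filter fun s => close s tk).card
              + (Finset.univ.filter fun s => close s tk ∧ (s : ℕ) < k).card :=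
                add_le_add (Finset.card_image_le) (Finset.card_image_le)
            _ ≤ M + M := by
                refine add_le_add (hcard tk) (le_trans (Finset.card_le_card ?_) (hcard tk))
                intro s hs
                rw [Finset.mem_filter] at hs ⊢
                exact ⟨hs.1, hs.2.1⟩
            _ = 2 * M := by ring
        obtain ⟨w, hwU, hw⟩ := Hav A hcardA
        refine ⟨Function.update v tk w, fun t ht => ?_⟩
        rcases Nat.lt_succ_iff_lt_or_eq.1 ht with ht' | ht'
        · have htne : t ≠ tk := by
            intro h; rw [h] at ht'; exact absurd ht' (lt_irrefl _)
          rw [Function.update_of_ne htne]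
          obtain ⟨h1, h2, h3⟩ := hv t ht'
          refine ⟨h1, h2, fun s hs hcs => ?_⟩
          have hsne : s ≠ tk := by
            intro h; rw [h] at hs; simp only [htk] at hs; omega
          rw [Function.update_of_ne hsne]
          exact h3 s hs hcs
        · have hteq : t = tk := Fin.ext ht'
          rw [hteq, Function.update_self]
          refine ⟨hwU, fun s hcs => ?_, fun s hs hcs => ?_⟩
          · apply hw
            rw [hA]
            apply Finset.mem_union_left
            exact Finset.mem_image_of_mem u (Finset.mem_filter.2 ⟨Finset.mem_univ s, hcs⟩)
          · have hsne : s ≠ tk := by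
              intro h; rw [h] at hs; simp only [htk] at hs; omega
            rw [Function.update_of_ne hsne]
            apply hw
            rw [hA]
            apply Finset.mem_union_right
            exact Finset.mem_image_of_mem v
              (Finset.mem_filter.2 ⟨Finset.mem_univ s, hcs, hs⟩)
      · refine ⟨v, fun t ht => hv t ?_⟩
        have := t.isLt
        omega
  obtain ⟨v, hv⟩ := key T
  exact ⟨v, fun t => hv t t.isLt⟩

/-! ### Pair norms -/

lemma pairCtrl_sub {nZ nU : ℕ} (z z' : EuclideanSpace ℝ (Fin nZ))
    (u u' : EuclideanSpace ℝ (Fin nU)) :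
    pairCtrl z u - pairCtrl z' u' = pairCtrl (z - z') (u - u') := rfl

lemma norm_pairCtrl_sq {nZ nU : ℕ} (z : EuclideanSpace ℝ (Fin nZ))
    (u : EuclideanSpace ℝ (Fin nU)) :
    ‖pairCtrl z u‖ ^ 2 = ‖z‖ ^ 2 + ‖u‖ ^ 2 := by
  rw [WithLp.prod_norm_sq_eq_of_L2]
  rfl

lemma norm_fst_le_pairCtrl {nZ nU : ℕ} (z : EuclideanSpace ℝ (Fin nZ))
    (u : EuclideanSpace ℝ (Fin nU)) :
    ‖z‖ ≤ ‖pairCtrl z u‖ := by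
  have h := norm_pairCtrl_sq z u
  nlinarith [norm_nonneg (pairCtrl z u), norm_nonneg z, norm_nonneg u, sq_nonneg ‖u‖]

lemma norm_snd_le_pairCtrl {nZ nU : ℕ} (z : EuclideanSpace ℝ (Fin nZ))
    (u : EuclideanSpace ℝ (Fin nU)) :
    ‖u‖ ≤ ‖pairCtrl z u‖ := by
  have h := norm_pairCtrl_sq z u
  nlinarith [norm_nonneg (pairCtrl z u), norm_nonneg z, norm_nonneg u, sq_nonneg ‖z‖]

end

end RegretLB

open RegretLB
open scoped ENNReal

/-- Algorithm-independent regret lower bound: there is a `κ > 0` (depending only on the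
dimension `d = nZ + nU`) such that for any ξ-separated context sequence and controls in a
compact control set `U` of sufficiently large volume, there is a nonpositive `C¹` cost `C`
with `L`-Lipschitz gradient vanishing to first order at each played pair `(z_t, u_t)`, on
which every step incurs regret at least `κ·L·δ²`. -/
theorem regret_lower_bound {nZ nU : ℕ} (hnZ : 1 ≤ nZ) (hnU : 1 ≤ nU) :
    ∃ κ : ℝ, 0 < κ ∧
      ∀ L : ℝ, 0 < L →
      ∀ U : Set (EuclideanSpace ℝ (Fin nU)), IsCompact U → 0 < volume U →
      ∀ ξ δ : ℝ, 0 < ξ → 0 < δ →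
      (volume (Metric.ball (0 : EuclideanSpace ℝ (Fin nU)) 1)
          * (⌈2 * Real.sqrt nZ * δ / ξ⌉₊ : ENNReal) ^ nZ * ENNReal.ofReal δ ^ nU
        < volume U) →
      ∀ (T : ℕ) (z : Fin T → EuclideanSpace ℝ (Fin nZ))
        (u : Fin T → EuclideanSpace ℝ (Fin nU)),
      (∀ t, u t ∈ U) →
      (∀ t t', t ≠ t' → ξ ≤ ‖z t - z t'‖) →
      ∃ C : CtrlSpace nZ nU → ℝ,
        ContDiff ℝ 1 C ∧
        (∀ s, C s ≤ 0) ∧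
        (∀ x y, ‖gradient C y - gradient C x‖ ≤ L * ‖y - x‖) ∧
        (∀ t, C (pairCtrl (z t) (u t)) = 0 ∧ gradient C (pairCtrl (z t) (u t)) = 0) ∧
        (∀ t, ∃ v ∈ U, κ * L * δ ^ 2 ≤ C (pairCtrl (z t) (u t)) - C (pairCtrl (z t) v)) := by
  classical
  refine ⟨1 / 192, by norm_num, ?_⟩
  intro L hL U hUcomp hUvol ξ δ hξ hδ hvolume T z u huU hzsep
  set M : ℕ := ⌈2 * Real.sqrt nZ * δ / ξ⌉₊ ^ nZ with hMdef
  -- counting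
  have hcard : ∀ t : Fin T,
      (Finset.univ.filter fun s => ‖z s - z t‖ < δ).card ≤ M :=
    fun t => sep_card_le hnZ hξ hδ z hzsep (z t)
  -- avoidance
  have Hav : ∀ A : Finset (EuclideanSpace ℝ (Fin nU)), A.card ≤ 2 * M →
      ∃ v ∈ U, ∀ w ∈ A, δ / 2 ≤ ‖v - w‖ := by
    intro A hA
    apply exists_far_point (half_pos hδ)
    set V := volume (Metric.ball (0 : EuclideanSpace ℝ (Fin nU)) 1) with hV
    have key : ENNReal.ofReal ((δ / 2) ^ nU) * 2 ≤ ENNReal.ofReal δ ^ nU := by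
      have hreal : (δ / 2) ^ nU * 2 ≤ δ ^ nU := by
        rw [div_pow, div_mul_eq_mul_div, div_le_iff₀ (by positivity)]
        have h2 : (2:ℝ) ≤ 2 ^ nU := by
          calc (2:ℝ) = 2 ^ 1 := (pow_one 2).symm
            _ ≤ 2 ^ nU := pow_le_pow_right₀ (by norm_num) hnU
        nlinarith [pow_nonneg hδ.le nU]
      calc ENNReal.ofReal ((δ / 2) ^ nU) * 2
          = ENNReal.ofReal ((δ / 2) ^ nU) * ENNReal.ofReal 2 := by
            rw [ENNReal.ofReal_ofNat]
        _ = ENNReal.ofReal ((δ / 2) ^ nU * 2) := by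
            rw [← ENNReal.ofReal_mul (by positivity)]
        _ ≤ ENNReal.ofReal (δ ^ nU) := ENNReal.ofReal_le_ofReal hreal
        _ = ENNReal.ofReal δ ^ nU := ENNReal.ofReal_pow hδ.le nU
    calc (A.card : ℝ≥0∞) * (ENNReal.ofReal ((δ / 2) ^ nU) * V)
        ≤ ((2 * M : ℕ) : ℝ≥0∞) * (ENNReal.ofReal ((δ / 2) ^ nU) * V) := by
          gcongr
      _ = (M : ℝ≥0∞) * ((ENNReal.ofReal ((δ / 2) ^ nU) * 2) * V) := by
          push_cast
          ring
      _ ≤ (M : ℝ≥0∞) * (ENNReal.ofReal δ ^ nU * V) := by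
          gcongr
      _ = V * ((⌈2 * Real.sqrt nZ * δ / ξ⌉₊ : ℝ≥0∞)) ^ nZ * ENNReal.ofReal δ ^ nU := by
          rw [hMdef]
          push_cast
          ring
      _ < volume U := hvolume
  -- greedy choice of controls
  obtain ⟨v, hv⟩ := exists_greedy_seq (U := U) (ρ := δ / 2) (M := M)
    (fun s t => ‖z s - z t‖ < δ) hcard u Hav
  -- set up the cost function
  set r : ℝ := δ / 4 with hrdef
  have hr : 0 < r := by positivity
  set a : ℝ := 1 / 192 * L * δ ^ 2 with hadef
  have ha : 0 < a := by positivity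
  set c : ℝ := a / r ^ 4 with hcdef
  have hc : 0 < c := by positivity
  set P : Fin T → CtrlSpace nZ nU := fun t => pairCtrl (z t) (v t) with hPdef
  -- separation of bump centers
  have hPsep : ∀ t t' : Fin T, t ≠ t' → 2 * r ≤ ‖P t - P t'‖ := by
    intro t t' hne
    have h2r : 2 * r = δ / 2 := by rw [hrdef]; ring
    rcases le_or_gt (δ / 2) ‖z t - z t'‖ with hfar | hclose
    · calc 2 * r = δ / 2 := h2r
        _ ≤ ‖z t - z t'‖ := hfar
        _ ≤ ‖P t - P t'‖ := by
            rw [hPdef]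
            simp only []
            rw [pairCtrl_sub]
            exact norm_fst_le_pairCtrl _ _
    · have hclose' : ‖z t - z t'‖ < δ := lt_of_lt_of_le hclose (by linarith)
      rcases Ne.lt_or_gt (fun h : (t : ℕ) = (t' : ℕ) => hne (Fin.ext h)) with hlt | hlt
      · -- t < t' : use hv t' with s := t
        have hts : ‖z t - z t'‖ < δ := hclose'
        have := (hv t').2.2 t hlt hts
        calc 2 * r = δ / 2 := h2r
          _ ≤ ‖v t' - v t‖ := this
          _ = ‖v t - v t'‖ := norm_sub_rev _ _
          _ ≤ ‖P t - P t'‖ := by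
              rw [hPdef]; simp only []
              rw [pairCtrl_sub]
              exact norm_snd_le_pairCtrl _ _
      · -- t' < t
        have hts : ‖z t' - z t‖ < δ := by rwa [norm_sub_rev]
        have := (hv t).2.2 t' hlt hts
        calc 2 * r = δ / 2 := h2r
          _ ≤ ‖v t - v t'‖ := this
          _ ≤ ‖P t - P t'‖ := by
              rw [hPdef]; simp only []
              rw [pairCtrl_sub]
              exact norm_snd_le_pairCtrl _ _
  -- played points are far from all bump centers
  have hfarpt : ∀ t s : Fin T, r ≤ ‖pairCtrl (z t) (u t) - P s‖ := by
    intro t s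
    rcases le_or_gt r ‖z t - z s‖ with hfar | hclose
    · calc r ≤ ‖z t - z s‖ := hfar
        _ ≤ ‖pairCtrl (z t) (u t) - P s‖ := by
            rw [hPdef]; simp only []
            rw [pairCtrl_sub]
            exact norm_fst_le_pairCtrl _ _
    · have hts : ‖z t - z s‖ < δ := lt_of_lt_of_le hclose (by rw [hrdef]; linarith)
      have h1 : δ / 2 ≤ ‖v s - u t‖ := (hv s).2.1 t hts
      calc r ≤ δ / 2 := by rw [hrdef]; linarith
        _ ≤ ‖v s - u t‖ := h1
        _ = ‖u t - v s‖ := norm_sub_rev _ _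
        _ ≤ ‖pairCtrl (z t) (u t) - P s‖ := by
            rw [hPdef]; simp only []
            rw [pairCtrl_sub]
            exact norm_snd_le_pairCtrl _ _
  refine ⟨cost c r P, contDiff_cost c r P, ?_, ?_, ?_, ?_⟩
  · -- nonpositive
    intro s
    rw [cost]
    have : 0 ≤ c * ∑ i, bump r (P i) s :=
      mul_nonneg hc.le (Finset.sum_nonneg fun i _ => bump_nonneg _ _ _)
    linarith
  · -- Lipschitz gradient
    intro x y
    rw [gradient_cost, gradient_cost, ← smul_sub, norm_smul, Real.norm_eq_abs, abs_neg,
      abs_of_nonneg hc.le]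
    have hlip := sum_bgrad_lipschitz hr.le hPsep y x
    have hCL : c * (12 * r ^ 2) = L := by
      rw [hcdef, hadef, hrdef]
      field_simp
      ring
    calc c * ‖(∑ i, bgrad r (P i) y) - ∑ i, bgrad r (P i) x‖
        ≤ c * (12 * r ^ 2 * ‖y - x‖) := by
          exact mul_le_mul_of_nonneg_left hlip hc.le
      _ = (c * (12 * r ^ 2)) * ‖y - x‖ := by ring
      _ = L * ‖y - x‖ := by rw [hCL]
  · -- vanishing at played points
    intro t
    constructor
    · rw [cost]
      have : ∀ s ∈ (Finset.univ : Finset (Fin T)),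
          bump r (P s) (pairCtrl (z t) (u t)) = 0 :=
        fun s _ => bump_zero_of_far hr.le (hfarpt t s)
      rw [Finset.sum_congr rfl this]
      simp
    · rw [gradient_cost]
      have : ∀ s ∈ (Finset.univ : Finset (Fin T)),
          bgrad r (P s) (pairCtrl (z t) (u t)) = 0 :=
        fun s _ => bgrad_zero_of_far hr.le (hfarpt t s)
      rw [Finset.sum_congr rfl this]
      simp
  · -- regret
    intro t
    refine ⟨v t, (hv t).1, ?_⟩
    have hzero : cost c r P (pairCtrl (z t) (u t)) = 0 := by
      rw [cost]
      have : ∀ s ∈ (Finset.univ : Finset (Fin T)),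
          bump r (P s) (pairCtrl (z t) (u t)) = 0 :=
        fun s _ => bump_zero_of_far hr.le (hfarpt t s)
      rw [Finset.sum_congr rfl this]
      simp
    have hPt : pairCtrl (z t) (v t) = P t := rfl
    have hval : a ≤ c * ∑ s, bump r (P s) (P t) := by
      have hsingle : bump r (P t) (P t) ≤ ∑ s, bump r (P s) (P t) :=
        Finset.single_le_sum (f := fun s => bump r (P s) (P t))
          (fun s _ => bump_nonneg _ _ _) (Finset.mem_univ t)
      have hbs : bump r (P t) (P t) = r ^ 4 := bump_self hr.le (P t)
      have hcr : c * r ^ 4 = a := by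
        rw [hcdef]
        field_simp
      calc a = c * r ^ 4 := hcr.symm
        _ = c * bump r (P t) (P t) := by rw [hbs]
        _ ≤ c * ∑ s, bump r (P s) (P t) := mul_le_mul_of_nonneg_left hsingle hc.le
    have : cost c r P (pairCtrl (z t) (v t)) ≤ -a := by
      rw [hPt, cost]
      linarith
    rw [hzero]
    calc (1:ℝ) / 192 * L * δ ^ 2 = a := by rw [hadef]
      _ ≤ 0 - cost c r P (pairCtrl (z t) (v t)) := by linarith
end
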